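/- arXiv:1310.5903 — 7 statements merged into one kernel-verified Lean document; each statement's English description precedes it below -/
import Mathlib

section
/- Let g : ℝ → ℝ be continuous with g(s) ≥ 0 for s < 0, and suppose there is s₀ ≥ 0 such that g(s) ≤ 0 for all s ≥ s₀. If u is a solution of −div(φ(|∇u|)∇u) = g(u) in Ω, u = 0 on ∂Ω, then 0 ≤ u(x) ≤ s₀ for all x ∈ Ω. -/
open MeasureTheory Set Filter
open scoped RealInnerProductSpace Topology

/-- `u` is a solution of `-div(φ(|∇u|)∇u) = g(u)` in `Ω`, `u = 0` on `∂Ω`: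
`u ∈ C¹(Ω̄)`, `u = 0` on `∂Ω`, and the weak formulation holds for all test
functions `v ∈ C¹(Ω̄)` vanishing on `∂Ω`. -/
def IsWeakSolution {N : ℕ} (Ω : Set (EuclideanSpace ℝ (Fin N)))
    (φ : ℝ → ℝ) (g : ℝ → ℝ) (u : EuclideanSpace ℝ (Fin N) → ℝ) : Prop :=
  ContDiffOn ℝ 1 u (closure Ω) ∧ (∀ x ∈ frontier Ω, u x = 0) ∧
  ∀ v : EuclideanSpace ℝ (Fin N) → ℝ, ContDiffOn ℝ 1 v (closure Ω) →
    (∀ x ∈ frontier Ω, v x = 0) →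
    ∫ x in Ω, ⟪(φ ‖gradient u x‖) • gradient u x, gradient v x⟫ =
      ∫ x in Ω, g (u x) * v x

/-! Testing the equation with `v = ((u - a)⁺)²` for `a > s₀` gives
`∫ φ(|∇u|) |∇u|² · 2 (u - a)⁺ = ∫ g(u) ((u - a)⁺)² ≤ 0`, and the left integrand is continuous and
nonnegative, so `∇u` vanishes on `{u > s₀}`. Hence for `x ∈ Ω` with `u x > s₀ ≥ 0` the level set
`{y ∈ Ω̄ | u y = u x}` is open, and it is closed because it does not meet `∂Ω`, where `u = 0`.
In the connected space `ℝᴺ` it would then be everything, contradicting the boundedness of `Ω`.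
The lower bound is the upper bound for `-u`, which solves the problem with nonlinearity
`s ↦ -g (-s)` and `s₀ = 0`. -/

open InnerProductSpace

theorem hasDerivAt_sq_max_sub (c t : ℝ) :
    HasDerivAt (fun s : ℝ => max (s - c) 0 ^ 2) (2 * max (t - c) 0) t := by
  rw [hasDerivAt_iff_isLittleO]
  refine Asymptotics.IsBigO.trans_isLittleO ?_ (Asymptotics.isLittleO_pow_sub_sub t one_lt_two)
  refine Asymptotics.IsBigO.of_bound 1 (Eventually.of_forall fun s => ?_)
  simp only [Real.norm_eq_abs, one_mul, sq_abs, abs_pow, smul_eq_mul]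
  -- the remainder is at most `(s - t) ^ 2` because the derivative `2 (s - c)⁺` is 2-Lipschitz
  rw [abs_le]
  constructor <;> rcases le_total (s - c) 0 with hs | hs <;>
    rcases le_total (t - c) 0 with ht | ht <;>
    simp only [max_eq_left, max_eq_right, hs, ht] <;> nlinarith

theorem contDiff_sq_max_sub (c : ℝ) : ContDiff ℝ 1 (fun s : ℝ => max (s - c) 0 ^ 2) := by
  rw [contDiff_one_iff_deriv]
  refine ⟨fun t => (hasDerivAt_sq_max_sub c t).differentiableAt, ?_⟩
  rw [funext fun t => (hasDerivAt_sq_max_sub c t).deriv]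
  fun_prop

theorem continuousOn_sq_mul {φ : ℝ → ℝ} (hφ : ContinuousOn φ (Ioi 0))
    (hφ0 : Tendsto (fun t => t * φ t) (𝓝[>] 0) (𝓝 0)) :
    ContinuousOn (fun t => t ^ 2 * φ t) (Ici 0) := by
  intro t ht
  rcases (mem_Ici.mp ht).eq_or_lt with rfl | ht
  · rw [← Ioi_insert, continuousWithinAt_insert_self]
    simpa [ContinuousWithinAt, sq, mul_assoc] using
      (tendsto_nhdsWithin_of_tendsto_nhds tendsto_id).mul hφ0
  · exact ((continuous_pow 2).continuousAt.mul
      (hφ.continuousAt (Ioi_mem_nhds ht))).continuousWithinAt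

section Gradient

variable {F : Type*} [NormedAddCommGroup F] [InnerProductSpace ℝ F] [CompleteSpace F]

theorem gradient_fun_neg (u : F → ℝ) (x : F) :
    gradient (fun y => -u y) x = -gradient u x := by
  simp only [gradient, fderiv_fun_neg, map_neg]

theorem HasDerivAt.gradient_comp {h : ℝ → ℝ} {h' : ℝ} {u : F → ℝ} {x : F}
    (hh : HasDerivAt h h' (u x)) (hu : DifferentiableAt ℝ u x) :
    gradient (fun y => h (u y)) x = h' • gradient u x := by
  have hd : HasFDerivAt (fun y => h (u y)) (h' • fderiv ℝ u x) x :=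
    hh.comp_hasFDerivAt x hu.hasFDerivAt
  rw [gradient, hd.fderiv, map_smul]
  rfl

end Gradient

theorem eqOn_zero_of_setIntegral_nonpos {X : Type*} [TopologicalSpace X] [MeasurableSpace X]
    [OpensMeasurableSpace X] {μ : Measure X} [Measure.IsOpenPosMeasure μ] {f : X → ℝ} {s : Set X}
    (hs : IsOpen s) (hf : ContinuousOn f s) (hfi : IntegrableOn f s μ)
    (hf0 : ∀ x ∈ s, 0 ≤ f x) (hint : ∫ x in s, f x ∂μ ≤ 0) : EqOn f 0 s := by
  have hf0' : 0 ≤ᵐ[μ.restrict s] f := (ae_restrict_iff' hs.measurableSet).mpr (ae_of_all _ hf0)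
  have hae := (setIntegral_eq_zero_iff_of_nonneg_ae hf0' hfi).mp
    (hint.antisymm (setIntegral_nonneg hs.measurableSet hf0))
  exact Measure.eqOn_open_of_ae_eq hae hs hf continuousOn_const

theorem mem_of_mem_closure_of_ne_zero {X M : Type*} [TopologicalSpace X] [Zero M] {Ω : Set X}
    {u : X → M} (hΩo : IsOpen Ω) (hu0 : ∀ x ∈ frontier Ω, u x = 0) {y : X} (hy : y ∈ closure Ω)
    (huy : u y ≠ 0) : y ∈ Ω := by
  by_contra hyΩ
  exact huy (hu0 y ⟨hy, by rwa [hΩo.interior_eq]⟩)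

theorem forall_le_of_fderiv_eq_zero_of_lt {E : Type*} [NormedAddCommGroup E] [NormedSpace ℝ E]
    {Ω : Set E} (hΩo : IsOpen Ω) (hΩ : Ω ≠ univ) {u : E → ℝ} (hu : ContinuousOn u (closure Ω))
    (hdu : DifferentiableOn ℝ u Ω) (hu0 : ∀ x ∈ frontier Ω, u x = 0) {a : ℝ} (ha : 0 ≤ a)
    (hflat : ∀ x ∈ Ω, a < u x → fderiv ℝ u x = 0) : ∀ x ∈ Ω, u x ≤ a := by
  by_contra! ⟨x, hxΩ, hax⟩
  set W := Ω ∩ u ⁻¹' Ioi a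
  have hWo : IsOpen W := (hu.mono subset_closure).isOpen_inter_preimage hΩo isOpen_Ioi
  have hS : W ∩ u ⁻¹' {u x} = closure Ω ∩ u ⁻¹' {u x} := by
    refine subset_antisymm (inter_subset_inter_left _ (inter_subset_left.trans subset_closure)) ?_
    rintro y ⟨hy, hyx : u y = u x⟩
    exact ⟨⟨mem_of_mem_closure_of_ne_zero hΩo hu0 hy (by linarith), show a < u y by linarith⟩, hyx⟩
  have hclopen : IsClopen (W ∩ u ⁻¹' {u x}) :=
    ⟨hS ▸ hu.preimage_isClosed_of_isClosed isClosed_closure isClosed_singleton,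
      hWo.isOpen_inter_preimage_of_fderiv_eq_zero (hdu.mono inter_subset_left)
        (fun y hy => hflat y hy.1 hy.2) _⟩
  refine hΩ (eq_univ_of_univ_subset ?_)
  rw [← hclopen.eq_univ ⟨x, ⟨hxΩ, hax⟩, rfl⟩]
  exact inter_subset_left.trans inter_subset_left

namespace IsWeakSolution

variable {N : ℕ} {Ω : Set (EuclideanSpace ℝ (Fin N))} {φ g : ℝ → ℝ}
  {u : EuclideanSpace ℝ (Fin N) → ℝ}

theorem neg (hu : IsWeakSolution Ω φ g u) :
    IsWeakSolution Ω φ (fun s => -g (-s)) (fun x => -u x) := by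
  obtain ⟨hC1, hu0, hweak⟩ := hu
  refine ⟨hC1.neg, fun x hx => by simp [hu0 x hx], fun v hv hv0 => ?_⟩
  simp only [gradient_fun_neg, norm_neg, smul_neg, inner_neg_left, neg_neg, neg_mul,
    integral_neg, hweak v hv hv0]

theorem continuousOn_gradient (hu : IsWeakSolution Ω φ g u) (hΩo : IsOpen Ω) :
    ContinuousOn (gradient u) Ω :=
  (toDual ℝ _).symm.continuous.comp_continuousOn
    ((hu.1.mono subset_closure).continuousOn_fderiv_of_isOpen hΩo le_rfl)

theorem differentiableAt (hu : IsWeakSolution Ω φ g u) (hΩo : IsOpen Ω)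
    {x : EuclideanSpace ℝ (Fin N)} (hx : x ∈ Ω) : DifferentiableAt ℝ u x :=
  (hu.1.differentiableOn one_ne_zero x (subset_closure hx)).differentiableAt
    (mem_of_superset (hΩo.mem_nhds hx) subset_closure)

theorem setIntegral_energy_eq (hu : IsWeakSolution Ω φ g u) (hΩo : IsOpen Ω) {a : ℝ}
    (ha : 0 ≤ a) :
    ∫ x in Ω, ‖gradient u x‖ ^ 2 * φ ‖gradient u x‖ * (2 * max (u x - a) 0) =
      ∫ x in Ω, g (u x) * max (u x - a) 0 ^ 2 := by
  obtain ⟨hC1, hu0, hweak⟩ := id hu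
  rw [← hweak (fun x => max (u x - a) 0 ^ 2) ((contDiff_sq_max_sub a).comp_contDiffOn hC1)
    (fun x hx => by simp [hu0 x hx, ha])]
  refine setIntegral_congr_fun hΩo.measurableSet fun x hx => ?_
  simp only [(hasDerivAt_sq_max_sub a (u x)).gradient_comp (hu.differentiableAt hΩo hx),
    real_inner_smul_left, real_inner_smul_right, real_inner_self_eq_norm_sq]
  ring

theorem gradient_eq_zero_of_lt (hu : IsWeakSolution Ω φ g u) (hΩo : IsOpen Ω)
    (hΩb : Bornology.IsBounded Ω) (hφ : ContinuousOn φ (Ioi 0)) (hφpos : ∀ t > 0, 0 < φ t)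
    (hφ0 : Tendsto (fun t => t * φ t) (𝓝[>] 0) (𝓝 0)) {a : ℝ} (ha : 0 < a)
    (hg : ∀ s > a, g s ≤ 0) : ∀ x ∈ Ω, a < u x → gradient u x = 0 := by
  obtain ⟨hC1, hu0, -⟩ := id hu
  set F := fun x => ‖gradient u x‖ ^ 2 * φ ‖gradient u x‖ * (2 * max (u x - a) 0)
  have hF0 : ∀ x ∈ Ω, 0 ≤ F x := by
    intro x _
    rcases (norm_nonneg (gradient u x)).eq_or_lt with h | h
    · simp [F, ← h]
    · have := hφpos _ h
      positivity
  have hFc : ContinuousOn F Ω :=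
    ((continuousOn_sq_mul hφ hφ0).comp (hu.continuousOn_gradient hΩo).norm
      fun _ _ => norm_nonneg _).mul (by have := hC1.continuousOn.mono subset_closure; fun_prop)
  -- `0 < a` keeps `{u ≥ a}` away from `∂Ω`, so `F` is supported in a compact subset of `Ω`
  have hK : IsCompact (closure Ω ∩ u ⁻¹' Ici a) :=
    hΩb.isCompact_closure.of_isClosed_subset
      (hC1.continuousOn.preimage_isClosed_of_isClosed isClosed_closure isClosed_Ici)
      inter_subset_left
  have hKΩ : closure Ω ∩ u ⁻¹' Ici a ⊆ Ω := fun y ⟨hy, hay⟩ =>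
    mem_of_mem_closure_of_ne_zero hΩo hu0 hy (ha.trans_le hay).ne'
  have hFi : IntegrableOn F Ω :=
    ((hFc.mono hKΩ).integrableOn_compact hK).of_forall_sdiff_eq_zero hΩo.measurableSet
      fun y ⟨hyΩ, hyK⟩ => by
        have hya : u y - a ≤ 0 := by
          by_contra! h
          exact hyK ⟨subset_closure hyΩ, by simp only [mem_preimage, mem_Ici]; linarith⟩
        simp [F, max_eq_right hya]
  have hint : ∫ x in Ω, F x ≤ 0 := by
    rw [hu.setIntegral_energy_eq hΩo ha.le]
    refine setIntegral_nonpos hΩo.measurableSet fun x _ => ?_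
    rcases le_or_gt (u x) a with hxa | hxa
    · simp [max_eq_right (sub_nonpos.mpr hxa)]
    · exact mul_nonpos_of_nonpos_of_nonneg (hg _ hxa) (sq_nonneg _)
  intro x hx hax
  by_contra hne
  have hFx : 0 < F x := by
    have h₁ := norm_pos_iff.2 hne
    have h₂ := hφpos _ h₁
    have h₃ : 0 < max (u x - a) 0 := lt_max_of_lt_left (by linarith)
    positivity
  exact hFx.ne' (eqOn_zero_of_setIntegral_nonpos hΩo hFc hFi hF0 hint hx)

theorem forall_le_of_nonpos_on_Ioi (hu : IsWeakSolution Ω φ g u) (hN : 0 < N) (hΩo : IsOpen Ω)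
    (hΩb : Bornology.IsBounded Ω) (hφ : ContinuousOn φ (Ioi 0)) (hφpos : ∀ t > 0, 0 < φ t)
    (hφ0 : Tendsto (fun t => t * φ t) (𝓝[>] 0) (𝓝 0)) {s₀ : ℝ} (hs₀ : 0 ≤ s₀)
    (hg : ∀ s > s₀, g s ≤ 0) : ∀ x ∈ Ω, u x ≤ s₀ := by
  have : Nonempty (Fin N) := ⟨⟨0, hN⟩⟩
  refine forall_le_of_fderiv_eq_zero_of_lt hΩo
    (fun h => NormedSpace.unbounded_univ ℝ _ (h ▸ hΩb)) hu.1.continuousOn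
    (fun x hx => (hu.differentiableAt hΩo hx).differentiableWithinAt) hu.2.1 hs₀
    fun x hx hx₀ => ?_
  have hgrad := hu.gradient_eq_zero_of_lt hΩo hΩb hφ hφpos hφ0 (a := (s₀ + u x) / 2)
    (by linarith) (fun s hs => hg s (by linarith)) x hx (by linarith)
  rw [← toDual_gradient, hgrad, map_zero]

end IsWeakSolution

theorem solutions_bounded_between_general
    {N : ℕ} (hN : 0 < N) (Ω : Set (EuclideanSpace ℝ (Fin N)))
    (hΩo : IsOpen Ω) (hΩb : Bornology.IsBounded Ω)
    (φ : ℝ → ℝ) (hφC1 : ContDiffOn ℝ 1 φ (Ioi 0)) (hφpos : ∀ t > 0, 0 < φ t)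
    (hφ1i : Tendsto (fun t => t * φ t) (𝓝[>] 0) (𝓝 0))
    (g : ℝ → ℝ)
    (hgneg : ∀ s < (0 : ℝ), 0 ≤ g s)
    (s₀ : ℝ) (hs₀ : 0 ≤ s₀) (hgpos : ∀ s ≥ s₀, g s ≤ 0)
    (u : EuclideanSpace ℝ (Fin N) → ℝ) (hu : IsWeakSolution Ω φ g u) :
    ∀ x ∈ Ω, 0 ≤ u x ∧ u x ≤ s₀ := by
  intro x hx
  have hφ := hφC1.continuousOn
  have hneg := hu.neg.forall_le_of_nonpos_on_Ioi hN hΩo hΩb hφ hφpos hφ1i le_rfl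
    (fun s hs => neg_nonpos.mpr (hgneg _ (neg_neg_of_pos hs))) x hx
  exact ⟨neg_nonpos.mp hneg,
    hu.forall_le_of_nonpos_on_Ioi hN hΩo hΩb hφ hφpos hφ1i hs₀ (fun s hs => hgpos s hs.le) x hx⟩

theorem solutions_bounded_between
    {N : ℕ} (hN : 0 < N) (Ω : Set (EuclideanSpace ℝ (Fin N)))
    (hΩo : IsOpen Ω) (hΩb : Bornology.IsBounded Ω) (hΩc : IsConnected Ω)
    (φ : ℝ → ℝ) (hφC1 : ContDiffOn ℝ 1 φ (Ioi 0)) (hφpos : ∀ t > 0, 0 < φ t)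
    (hφ1i : Tendsto (fun t => t * φ t) (𝓝[>] 0) (𝓝 0))
    (hφ1ii : Tendsto (fun t => t * φ t) atTop atTop)
    (hφ2 : StrictMonoOn (fun t => t * φ t) (Ioi 0))
    (g : ℝ → ℝ) (hg : Continuous g)
    (hgneg : ∀ s < (0 : ℝ), 0 ≤ g s)
    (s₀ : ℝ) (hs₀ : 0 ≤ s₀) (hgpos : ∀ s ≥ s₀, g s ≤ 0)
    (u : EuclideanSpace ℝ (Fin N) → ℝ) (hu : IsWeakSolution Ω φ g u) :
    ∀ x ∈ Ω, 0 ≤ u x ∧ u x ≤ s₀ :=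
  solutions_bounded_between_general hN Ω hΩo hΩb φ hφC1 hφpos hφ1i g hgneg s₀ hs₀ hgpos u hu
end

section
/- Let B ⊂ ℝ^N be the open ball of radius R centered at the origin, λ > 0, f : ℝ → ℝ continuous, and let ū ∈ C¹(B̄) be radially symmetric with ū = 0 on ∂B, satisfying ∫_B φ(|∇ū|)∇ū·∇v dx = λ ∫_B f(ū) v dx for all Lipschitz functions v on B̄ vanishing on ∂B. Write u(r) = ū(x) for |x| = r. Then for every r ∈ (0,R): −r^{N−1} φ(|u′(r)|) u′(r) = λ ∫₀^r f(u(t)) t^{N−1} dt. -/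
/-!
Test the weak formulation against the radial Lipschitz cutoff `v(x) = ramp r ε |x|`, which is
`1` for `|x| ≤ r`, `0` for `|x| ≥ r + ε` and affine in `|x|` in between. Then
`∇v = -ε⁻¹ x/|x|` on the shell `r < |x| < r + ε` and `∇ū = u'(|x|) x/|x|`, so in polar
coordinates the weak formulation reads
`-ε⁻¹ ∫_r^{r+ε} t^{N-1} φ(|u'|) u' dt = λ ∫_0^{r+ε} f(u) t^{N-1} ramp r ε t dt`.
As `ε → 0⁺` the left side tends to `-r^{N-1} φ(|u'(r)|) u'(r)`, because `u'` is continuous and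
`s ↦ φ(|s|) s` is continuous at `0` by `(φ₁)`, and the right side to `λ ∫_0^r f(u) t^{N-1} dt`.
-/

open MeasureTheory Set Filter
open scoped RealInnerProductSpace Topology

section Gradient

variable {F : Type*} [NormedAddCommGroup F] [InnerProductSpace ℝ F] [CompleteSpace F]

theorem hasGradientAt_norm {x : F} (hx : x ≠ 0) :
    HasGradientAt (fun y : F => ‖y‖) (‖x‖⁻¹ • x) x := by
  have hsq := (hasStrictFDerivAt_norm_sq x).hasFDerivAt.sqrt (by positivity)
  simp only [Real.sqrt_sq (norm_nonneg _)] at hsq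
  have hdual : InnerProductSpace.toDual ℝ F (‖x‖⁻¹ • x) = (1 / (2 * ‖x‖)) • 2 • innerSL ℝ x := by
    ext y
    simp only [map_smul, smul_apply, InnerProductSpace.toDual_apply_apply, smul_eq_mul, one_div,
      mul_inv_rev, coe_innerSL_apply, nsmul_eq_mul, Nat.cast_ofNat]
    field_simp
  rwa [hasGradientAt_iff_hasFDerivAt, hdual]

theorem HasDerivAt.hasGradientAt_comp_norm {g : ℝ → ℝ} {g' : ℝ} {x : F}
    (hg : HasDerivAt g g' ‖x‖) (hx : x ≠ 0) :
    HasGradientAt (fun y => g ‖y‖) (g' • ‖x‖⁻¹ • x) x := by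
  rw [hasGradientAt_iff_hasFDerivAt, map_smul]
  exact hg.comp_hasFDerivAt x (hasGradientAt_norm hx).hasFDerivAt

theorem gradient_eq_of_comp_norm {ubar : F → ℝ} {u : ℝ → ℝ} {R : ℝ}
    (hu : ∀ x : F, ‖x‖ ≤ R → u ‖x‖ = ubar x) {x : F} (hx : x ≠ 0) (hxR : ‖x‖ < R)
    (hdu : DifferentiableAt ℝ u ‖x‖) :
    gradient ubar x = deriv u ‖x‖ • ‖x‖⁻¹ • x := by
  have hev : (fun y => u ‖y‖) =ᶠ[𝓝 x] ubar := by
    filter_upwards [Metric.isOpen_ball.mem_nhds (mem_ball_zero_iff.2 hxR)] with y hy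
    exact hu y (mem_ball_zero_iff.1 hy).le
  rw [← hev.gradient_eq]
  exact (hdu.hasDerivAt.hasGradientAt_comp_norm hx).gradient

end Gradient

theorem ContDiffOn.of_comp_norm {E : Type*} [NormedAddCommGroup E] [NormedSpace ℝ E]
    [Nontrivial E]
    {n : WithTop ℕ∞} {R : ℝ} {ubar : E → ℝ} {u : ℝ → ℝ}
    (hC : ContDiffOn ℝ n ubar (Metric.closedBall 0 R)) (hu : ∀ x : E, ‖x‖ ≤ R → u ‖x‖ = ubar x) :
    ContDiffOn ℝ n u (Icc 0 R) := by
  obtain ⟨e, he⟩ := exists_norm_eq E zero_le_one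
  have hnorm : ∀ t ∈ Icc (0 : ℝ) R, ‖t • e‖ = t := fun t ht => by
    rw [norm_smul, he, mul_one, Real.norm_of_nonneg ht.1]
  refine (hC.comp (contDiff_id.smul_const e).contDiffOn fun t ht => ?_).congr fun t ht => ?_
  · rw [Metric.mem_closedBall, dist_zero_right, id, hnorm t ht]; exact ht.2
  · rw [Function.comp_apply, id, ← hu _ ((hnorm t ht).trans_le ht.2), hnorm t ht]

theorem continuous_apply_abs_mul {φ : ℝ → ℝ} (hφ : ContinuousOn φ (Ioi 0))
    (h0 : Tendsto (fun t => t * φ t) (𝓝[>] 0) (𝓝 0)) :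
    Continuous fun s => φ |s| * s := by
  refine continuous_iff_continuousAt.2 fun s => ?_
  rcases eq_or_ne s 0 with rfl | hs
  · rw [← continuousWithinAt_compl_self, ContinuousWithinAt, abs_zero, mul_zero]
    refine squeeze_zero_norm (fun s => ?_) (by simpa using (h0.comp tendsto_abs_nhdsNE_zero).norm)
    simp [mul_comm]
  · exact ((hφ.continuousAt (Ioi_mem_nhds (abs_pos.2 hs))).comp continuous_abs.continuousAt).mul
      continuousAt_id

noncomputable def ramp (r ε t : ℝ) : ℝ := max 0 (min 1 ((r + ε - t) / ε))

section Ramp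

variable {r ε t : ℝ}

theorem ramp_nonneg : 0 ≤ ramp r ε t := le_max_left _ _

theorem ramp_le_one : ramp r ε t ≤ 1 := max_le zero_le_one (min_le_left _ _)

theorem ramp_of_le (hε : 0 < ε) (ht : t ≤ r) : ramp r ε t = 1 := by
  have : 1 ≤ (r + ε - t) / ε := by rw [le_div_iff₀ hε]; linarith
  rw [ramp, min_eq_left this, max_eq_right zero_le_one]

theorem ramp_of_ge (hε : 0 ≤ ε) (ht : r + ε ≤ t) : ramp r ε t = 0 := by
  have : (r + ε - t) / ε ≤ 0 := div_nonpos_of_nonpos_of_nonneg (by linarith) hε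
  rw [ramp, min_eq_right (this.trans zero_le_one), max_eq_left this]

theorem ramp_of_mem_Icc (hε : 0 < ε) (ht : t ∈ Icc r (r + ε)) : ramp r ε t = (r + ε - t) / ε := by
  have h1 : (r + ε - t) / ε ≤ 1 := by rw [div_le_iff₀ hε]; linarith [ht.1]
  have h0 : 0 ≤ (r + ε - t) / ε := div_nonneg (by linarith [ht.2]) hε.le
  rw [ramp, min_eq_right h1, max_eq_right h0]

theorem lipschitzWith_ramp : LipschitzWith ‖ε⁻¹‖₊ (ramp r ε) := by
  have : LipschitzWith ‖ε⁻¹‖₊ fun t => (r + ε - t) / ε := by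
    refine LipschitzWith.of_dist_le_mul fun a b => ?_
    have : (r + ε - a) / ε - (r + ε - b) / ε = ε⁻¹ * (b - a) := by ring
    rw [Real.dist_eq, Real.dist_eq, this, abs_mul, abs_sub_comm, coe_nnnorm, Real.norm_eq_abs]
  exact (this.const_min 1).const_max 0

theorem hasDerivAt_ramp (hε : 0 < ε) (hr : t ≠ r) (hrε : t ≠ r + ε) :
    HasDerivAt (ramp r ε) ((Ioo r (r + ε)).indicator (fun _ => -ε⁻¹) t) t := by
  rcases hr.lt_or_gt with ht | ht
  · rw [indicator_of_notMem (fun h : t ∈ Ioo r (r + ε) => (h.1.trans ht).false)]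
    refine (hasDerivAt_const t 1).congr_of_eventuallyEq ?_
    filter_upwards [Iio_mem_nhds ht] with s hs using ramp_of_le hε (le_of_lt hs)
  rcases hrε.lt_or_gt with ht' | ht'
  · rw [indicator_of_mem (show t ∈ Ioo r (r + ε) from ⟨ht, ht'⟩)]
    have : HasDerivAt (fun s => (r + ε - s) / ε) (-ε⁻¹) t := by
      simpa [neg_div] using ((hasDerivAt_id t).const_sub (r + ε)).div_const ε
    refine this.congr_of_eventuallyEq ?_
    filter_upwards [Ioo_mem_nhds ht ht'] with s hs using ramp_of_mem_Icc hε (Ioo_subset_Icc_self hs)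
  · rw [indicator_of_notMem (fun h : t ∈ Ioo r (r + ε) => (h.2.trans ht').false)]
    refine (hasDerivAt_const t 0).congr_of_eventuallyEq ?_
    filter_upwards [Ioi_mem_nhds ht'] with s hs using ramp_of_ge hε.le (le_of_lt hs)

end Ramp

theorem tendsto_inv_mul_integral_right {H : ℝ → ℝ} {s : Set ℝ} {r : ℝ} (hs : IsOpen s)
    (hr : r ∈ s) (hH : ContinuousOn H s) :
    Tendsto (fun ε => ε⁻¹ * ∫ t in r..r + ε, H t) (𝓝[>] 0) (𝓝 (H r)) := by
  have hderiv := intervalIntegral.integral_hasDerivAt_right (a := r) IntervalIntegrable.refl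
    (hH.stronglyMeasurableAtFilter hs r hr) (hH.continuousAt (hs.mem_nhds hr))
  simpa using hderiv.tendsto_slope_zero_right

theorem tendsto_integral_mul_ramp {F : ℝ → ℝ} {r R : ℝ} (hr : 0 ≤ r) (hrR : r < R)
    (hF : ContinuousOn F (Icc 0 R)) :
    Tendsto (fun ε => ∫ t in 0..r + ε, F t * ramp r ε t) (𝓝[>] 0) (𝓝 (∫ t in 0..r, F t)) := by
  obtain ⟨M, hM⟩ := isCompact_Icc.exists_bound_of_continuousOn hF
  have hsplit : ∀ᶠ ε in 𝓝[>] 0, (∫ t in 0..r, F t) + ∫ t in r..r + ε, F t * ramp r ε t =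
      ∫ t in 0..r + ε, F t * ramp r ε t := by
    filter_upwards [Ioo_mem_nhdsGT (sub_pos.2 hrR)] with ε hε
    have hint : ∀ a b, a ∈ Icc 0 R → b ∈ Icc 0 R →
        IntervalIntegrable (fun t => F t * ramp r ε t) volume a b := fun a b ha hb =>
      ((hF.mono (uIcc_subset_Icc ha hb)).mul
        (lipschitzWith_ramp.continuous.continuousOn)).intervalIntegrable
    rw [← intervalIntegral.integral_add_adjacent_intervals
      (hint 0 r ⟨le_rfl, hr.trans hrR.le⟩ ⟨hr, hrR.le⟩)
      (hint r (r + ε) ⟨hr, hrR.le⟩ ⟨by linarith [hε.1], by linarith [hε.2]⟩)]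
    congr 1
    refine intervalIntegral.integral_congr fun t ht => ?_
    rw [uIcc_of_le hr] at ht
    rw [ramp_of_le hε.1 ht.2, mul_one]
  have hsmall : ∀ᶠ ε in 𝓝[>] 0, ‖∫ t in r..r + ε, F t * ramp r ε t‖ ≤ M * ε := by
    filter_upwards [Ioo_mem_nhdsGT (sub_pos.2 hrR)] with ε hε
    have hbound : ∀ t ∈ uIoc r (r + ε), ‖F t * ramp r ε t‖ ≤ M := fun t ht => by
      rw [uIoc_of_le (by linarith [hε.1])] at ht
      rw [norm_mul, Real.norm_of_nonneg ramp_nonneg]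
      exact (mul_le_of_le_one_right (norm_nonneg _) ramp_le_one).trans
        (hM t ⟨by linarith [ht.1], by linarith [ht.2, hε.2]⟩)
    simpa [abs_of_pos hε.1] using intervalIntegral.norm_integral_le_of_norm_le_const hbound
  have hM0 : Tendsto (fun ε => M * ε) (𝓝[>] 0) (𝓝 0) :=
    ((continuous_const_mul M).tendsto' 0 0 (mul_zero M)).mono_left nhdsWithin_le_nhds
  simpa using (tendsto_const_nhds.add (squeeze_zero_norm' hsmall hM0)).congr' hsplit

section Polar

variable {E : Type*} [NormedAddCommGroup E] [NormedSpace ℝ E] [FiniteDimensional ℝ E]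
  [MeasurableSpace E] [BorelSpace E] (μ : Measure E) [μ.IsAddHaarMeasure] [Nontrivial E]

theorem setIntegral_ball_fun_norm {F : Type*} [NormedAddCommGroup F] [NormedSpace ℝ F]
    {G : ℝ → F} {a b R : ℝ} (hR : 0 < R) (ha : 0 ≤ a) (hb : b ≤ R)
    (hG : ∀ ρ, 0 < ρ → ρ ∉ Ioo a b → G ρ = 0) :
    ∫ x in Metric.ball 0 R, G ‖x‖ ∂μ = Module.finrank ℝ E • μ.real (Metric.ball 0 1) •
      ∫ ρ in Ioo a b, ρ ^ (Module.finrank ℝ E - 1) • G ρ := by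
  rw [setIntegral_eq_integral_of_forall_compl_eq_zero fun x hx => ?_,
    integral_fun_norm_addHaar μ G,
    setIntegral_eq_of_subset_of_forall_sdiff_eq_zero measurableSet_Ioi
      (fun ρ (hρ : ρ ∈ Ioo a b) => ha.trans_lt hρ.1) fun ρ hρ => by rw [hG ρ hρ.1 hρ.2, smul_zero]]
  have hxR : R ≤ ‖x‖ := by simpa using hx
  exact hG _ (hR.trans_le hxR) fun h => (h.2.trans_le (hb.trans hxR)).false

theorem setIntegral_mul_ramp {ubar : E → ℝ} {u : ℝ → ℝ} {R r ε : ℝ} (f : ℝ → ℝ)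
    (hu : ∀ x : E, ‖x‖ ≤ R → u ‖x‖ = ubar x) (hr : 0 ≤ r) (hε : 0 < ε) (hrε : r + ε ≤ R) :
    ∫ x in Metric.ball 0 R, f (ubar x) * ramp r ε ‖x‖ ∂μ =
      Module.finrank ℝ E • μ.real (Metric.ball 0 1) •
        ∫ t in 0..r + ε, f (u t) * t ^ (Module.finrank ℝ E - 1) * ramp r ε t := by
  have hsupp : ∀ ρ, 0 < ρ → ρ ∉ Ioo 0 (r + ε) → f (u ρ) * ramp r ε ρ = 0 := fun ρ hρ hρ' => by
    rw [ramp_of_ge hε.le (not_lt.1 fun h => hρ' ⟨hρ, h⟩), mul_zero]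
  rw [setIntegral_congr_fun measurableSet_ball fun x hx => by
      rw [← hu x (mem_ball_zero_iff.1 hx).le],
    setIntegral_ball_fun_norm μ (by linarith) le_rfl hrε hsupp,
    intervalIntegral.integral_of_le (by linarith), integral_Ioc_eq_integral_Ioo]
  congr 3 with t
  rw [smul_eq_mul]
  ring

end Polar

section WeakForm

variable {E : Type*} [NormedAddCommGroup E] [InnerProductSpace ℝ E] [FiniteDimensional ℝ E]
  [MeasurableSpace E] [BorelSpace E] (μ : Measure E) [μ.IsAddHaarMeasure] [Nontrivial E]
  {ubar : E → ℝ} {u : ℝ → ℝ} {R r ε : ℝ}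

theorem setIntegral_inner_gradient_ramp (φ : ℝ → ℝ) (hu : ∀ x : E, ‖x‖ ≤ R → u ‖x‖ = ubar x)
    (hdu : ∀ t ∈ Ioo 0 R, DifferentiableAt ℝ u t) (hr : 0 < r) (hε : 0 < ε) (hrε : r + ε < R) :
    ∫ x in Metric.ball 0 R,
        ⟪φ ‖gradient ubar x‖ • gradient ubar x, gradient (fun y => ramp r ε ‖y‖) x⟫ ∂μ =
      Module.finrank ℝ E • μ.real (Metric.ball 0 1) •
        -(ε⁻¹ * ∫ t in r..r + ε, t ^ (Module.finrank ℝ E - 1) * (φ |deriv u t| * deriv u t)) := by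
  set G : ℝ → ℝ := fun ρ =>
    φ |deriv u ρ| * deriv u ρ * (Ioo r (r + ε)).indicator (fun _ => -ε⁻¹) ρ with hG
  -- The gradient formulas fail only on the spheres `‖x‖ ∈ {0, r, r + ε}`, which are null sets.
  have hsphere (ρ : ℝ) : ∀ᵐ x ∂μ, ‖x‖ ≠ ρ := by
    filter_upwards [measure_eq_zero_iff_ae_notMem.1 (Measure.addHaar_sphere μ 0 ρ)] with x hx
    simpa using hx
  have hpointwise : ∀ᵐ x ∂μ, x ∈ Metric.ball 0 R →
      ⟪φ ‖gradient ubar x‖ • gradient ubar x, gradient (fun y => ramp r ε ‖y‖) x⟫ = G ‖x‖ := by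
    filter_upwards [hsphere 0, hsphere r, hsphere (r + ε)] with x hx0 hxr hxrε hxR
    have hx : x ≠ 0 := norm_ne_zero_iff.1 hx0
    replace hxR : ‖x‖ < R := mem_ball_zero_iff.1 hxR
    have hn : ‖‖x‖⁻¹ • x‖ = 1 := norm_smul_inv_norm hx
    rw [gradient_eq_of_comp_norm hu hx hxR (hdu _ ⟨(norm_pos_iff.2 hx), hxR⟩),
      ((hasDerivAt_ramp hε hxr hxrε).hasGradientAt_comp_norm hx).gradient, norm_smul, hn,
      mul_one, Real.norm_eq_abs, inner_smul_left, inner_smul_left, inner_smul_right,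
      real_inner_self_eq_norm_sq, hn]
    simp only [hG, conj_trivial]
    ring
  have hGsupp : ∀ ρ, 0 < ρ → ρ ∉ Ioo r (r + ε) → G ρ = 0 := fun ρ _ hρ => by
    simp only [hG, indicator_of_notMem hρ, mul_zero]
  rw [setIntegral_congr_ae measurableSet_ball hpointwise,
    setIntegral_ball_fun_norm μ (by linarith) hr.le hrε.le hGsupp,
    intervalIntegral.integral_of_le (by linarith), integral_Ioc_eq_integral_Ioo,
    ← integral_const_mul, ← integral_neg]
  congr 2
  refine setIntegral_congr_fun measurableSet_Ioo fun ρ hρ => ?_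
  simp only [hG, indicator_of_mem hρ, smul_eq_mul]
  ring

theorem neg_inv_mul_integral_eq_of_weak (φ f : ℝ → ℝ) (lam : ℝ)
    (hu : ∀ x : E, ‖x‖ ≤ R → u ‖x‖ = ubar x) (hdu : ∀ t ∈ Ioo 0 R, DifferentiableAt ℝ u t)
    (hr : 0 < r) (hε : 0 < ε) (hrε : r + ε < R)
    (hweak : ∫ x in Metric.ball 0 R,
        ⟪φ ‖gradient ubar x‖ • gradient ubar x, gradient (fun y => ramp r ε ‖y‖) x⟫ ∂μ =
      lam * ∫ x in Metric.ball 0 R, f (ubar x) * ramp r ε ‖x‖ ∂μ) :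
    -(ε⁻¹ * ∫ t in r..r + ε, t ^ (Module.finrank ℝ E - 1) * (φ |deriv u t| * deriv u t)) =
      lam * ∫ t in 0..r + ε, f (u t) * t ^ (Module.finrank ℝ E - 1) * ramp r ε t := by
  rw [setIntegral_inner_gradient_ramp μ φ hu hdu hr hε hrε,
    setIntegral_mul_ramp μ f hu hr.le hε hrε.le, nsmul_eq_mul, nsmul_eq_mul, smul_eq_mul,
    smul_eq_mul] at hweak
  have hball : 0 < μ.real (Metric.ball 0 1) :=
    ENNReal.toReal_pos (Metric.measure_ball_pos μ 0 one_pos).ne' measure_ball_lt_top.ne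
  have hc : (Module.finrank ℝ E : ℝ) * μ.real (Metric.ball 0 1) ≠ 0 := by
    have := Module.finrank_pos (R := ℝ) (M := E)
    positivity
  apply mul_left_cancel₀ hc
  linear_combination hweak

end WeakForm

theorem radial_identity_general
    {N : ℕ} (hN : 0 < N) (R : ℝ)
    (φ : ℝ → ℝ) (hφC1 : ContDiffOn ℝ 1 φ (Ioi 0))
    (hφ1i : Tendsto (fun t => t * φ t) (𝓝[>] 0) (𝓝 0))
    (f : ℝ → ℝ) (hf : Continuous f) (lam : ℝ)
    (ubar : EuclideanSpace ℝ (Fin N) → ℝ)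
    (hC1 : ContDiffOn ℝ 1 ubar (closure (Metric.ball (0 : EuclideanSpace ℝ (Fin N)) R)))
    (hweak : ∀ v : EuclideanSpace ℝ (Fin N) → ℝ, (∃ K, LipschitzOnWith K v (closure (Metric.ball (0 : EuclideanSpace ℝ (Fin N)) R))) →
      (∀ x ∈ frontier (Metric.ball (0 : EuclideanSpace ℝ (Fin N)) R), v x = 0) →
      ∫ x in Metric.ball (0 : EuclideanSpace ℝ (Fin N)) R,
          ⟪(φ ‖gradient ubar x‖) • gradient ubar x, gradient v x⟫ =
        lam * ∫ x in Metric.ball (0 : EuclideanSpace ℝ (Fin N)) R, f (ubar x) * v x)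
    (u : ℝ → ℝ)
    (hu : ∀ x : EuclideanSpace ℝ (Fin N), ‖x‖ ≤ R → u ‖x‖ = ubar x) :
    ∀ r ∈ Ioo (0 : ℝ) R,
      -(r ^ (N - 1) * (φ |deriv u r| * deriv u r)) =
        lam * ∫ t in (0 : ℝ)..r, f (u t) * t ^ (N - 1) := by
  intro r hr
  have hR : 0 < R := hr.1.trans hr.2
  have : Nontrivial (EuclideanSpace ℝ (Fin N)) :=
    Module.nontrivial_of_finrank_pos (R := ℝ) (by simpa using hN)
  rw [closure_ball 0 hR.ne'] at hC1 hweak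
  rw [frontier_ball 0 hR.ne'] at hweak
  have hu1 : ContDiffOn ℝ 1 u (Icc 0 R) := hC1.of_comp_norm hu
  have hdu : ∀ t ∈ Ioo 0 R, DifferentiableAt ℝ u t := fun t ht =>
    (hu1.differentiableOn one_ne_zero).differentiableAt (Icc_mem_nhds ht.1 ht.2)
  have hH : ContinuousOn (fun t => t ^ (N - 1) * (φ |deriv u t| * deriv u t)) (Ioo 0 R) :=
    (continuousOn_pow _).mul ((continuous_apply_abs_mul hφC1.continuousOn hφ1i).comp_continuousOn
      ((hu1.mono Ioo_subset_Icc_self).continuousOn_deriv_of_isOpen isOpen_Ioo le_rfl))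
  have hidentity : ∀ᶠ ε in 𝓝[>] 0,
      -(ε⁻¹ * ∫ t in r..r + ε, t ^ (N - 1) * (φ |deriv u t| * deriv u t)) =
        lam * ∫ t in 0..r + ε, f (u t) * t ^ (N - 1) * ramp r ε t := by
    filter_upwards [Ioo_mem_nhdsGT (sub_pos.2 hr.2)] with ε hε
    have hv := hweak (fun y => ramp r ε ‖y‖)
      ⟨_, (lipschitzWith_ramp.comp lipschitzWith_one_norm).lipschitzOnWith⟩
      fun x hx => ramp_of_ge hε.1.le (by rw [mem_sphere_zero_iff_norm.1 hx]; linarith [hε.2])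
    simpa only [finrank_euclideanSpace_fin] using
      neg_inv_mul_integral_eq_of_weak volume φ f lam hu hdu hr.1 hε.1 (by linarith [hε.2]) hv
  exact tendsto_nhds_unique ((tendsto_inv_mul_integral_right isOpen_Ioo hr hH).neg.congr' hidentity)
    ((tendsto_integral_mul_ramp hr.1.le hr.2
      ((hf.comp_continuousOn hu1.continuousOn).mul (continuousOn_pow _))).const_mul lam)

/-- For a radially symmetric `C¹` solution `ū` of the weak formulation on the ball
`B = B(0,R)` (with Lipschitz test functions vanishing on `∂B`), the radial profile `u`
satisfies `-r^{N-1} φ(|u'(r)|) u'(r) = λ ∫₀^r f(u(t)) t^{N-1} dt` for `0 < r < R`. -/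
theorem radial_identity
    {N : ℕ} (hN : 0 < N) (R : ℝ) (hR : 0 < R)
    (φ : ℝ → ℝ) (hφC1 : ContDiffOn ℝ 1 φ (Ioi 0)) (hφpos : ∀ t > 0, 0 < φ t)
    (hφ1i : Tendsto (fun t => t * φ t) (𝓝[>] 0) (𝓝 0))
    (hφ1ii : Tendsto (fun t => t * φ t) atTop atTop)
    (hφ2 : StrictMonoOn (fun t => t * φ t) (Ioi 0))
    (f : ℝ → ℝ) (hf : Continuous f) (lam : ℝ) (hlam : 0 < lam)
    (ubar : EuclideanSpace ℝ (Fin N) → ℝ)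
    (hC1 : ContDiffOn ℝ 1 ubar (closure (Metric.ball (0 : EuclideanSpace ℝ (Fin N)) R)))
    (hbdry : ∀ x ∈ frontier (Metric.ball (0 : EuclideanSpace ℝ (Fin N)) R), ubar x = 0)
    (hradial : ∀ x y : EuclideanSpace ℝ (Fin N), ‖x‖ = ‖y‖ → ubar x = ubar y)
    (hweak : ∀ v : EuclideanSpace ℝ (Fin N) → ℝ, (∃ K, LipschitzOnWith K v (closure (Metric.ball (0 : EuclideanSpace ℝ (Fin N)) R))) →
      (∀ x ∈ frontier (Metric.ball (0 : EuclideanSpace ℝ (Fin N)) R), v x = 0) →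
      ∫ x in Metric.ball (0 : EuclideanSpace ℝ (Fin N)) R,
          ⟪(φ ‖gradient ubar x‖) • gradient ubar x, gradient v x⟫ =
        lam * ∫ x in Metric.ball (0 : EuclideanSpace ℝ (Fin N)) R, f (ubar x) * v x)
    (u : ℝ → ℝ)
    (hu : ∀ x : EuclideanSpace ℝ (Fin N), ‖x‖ ≤ R → u ‖x‖ = ubar x) :
    ∀ r ∈ Ioo (0 : ℝ) R,
      -(r ^ (N - 1) * (φ |deriv u r| * deriv u r)) =
        lam * ∫ t in (0 : ℝ)..r, f (u t) * t ^ (N - 1) :=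
  radial_identity_general hN R φ hφC1 hφ1i f hf lam ubar hC1 hweak u hu
end

section
/- Let R > 0, N ≥ 1, λ > 0, let f : ℝ → ℝ be continuous with f(s) ≤ 0 for s ∈ [a₁, b₁], where 0 < a₁ < b₁, and let u ∈ C¹([0,R]) satisfy u(R) = 0 and −r^{N−1} φ(|u′(r)|) u′(r) = λ ∫₀^r f(u(t)) t^{N−1} dt for all r ∈ (0,R). Suppose u attains its maximum at some r₀ ∈ [0,R) with u(r₀) = ‖u‖_∞ > a₁. Then ‖u‖_∞ > b₁. -/
/-!
Suppose `u r₀ ≤ b₁` and let `r₁` be the first point after `r₀` where `u` drops to `a₁`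
(it exists since `u R = 0 < a₁`). On `[r₀, r₁)` the values of `u` lie in `(a₁, b₁]`, so
`f ∘ u ≤ 0` there. The flux `∫₀^{r₀} f(u) tᴺ⁻¹` vanishes, since either `r₀ = 0` or `u' r₀ = 0`
at the interior maximum. Hence `∫₀^r f(u) tᴺ⁻¹ ≤ 0` on `(r₀, r₁)`, and the equation forces
`φ(|u'|) u' ≥ 0`, i.e. `u' ≥ 0`. So `u` increases on `[r₀, r₁]`, contradicting
`u r₁ ≤ a₁ < u r₀`.
-/

open MeasureTheory Set Filter
open scoped Topology

theorem ContinuousOn.exists_first_le {u : ℝ → ℝ} {a b c : ℝ} (hab : a ≤ b)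
    (hu : ContinuousOn u (Icc a b)) (ha : c < u a) (hb : u b ≤ c) :
    ∃ r ∈ Ioc a b, u r ≤ c ∧ ∀ t ∈ Ico a r, c < u t := by
  set S := Icc a b ∩ u ⁻¹' Iic c
  have hSne : S.Nonempty := ⟨b, ⟨hab, le_rfl⟩, hb⟩
  have hSbdd : BddBelow S := ⟨a, fun x hx => hx.1.1⟩
  have hr : sInf S ∈ S :=
    (hu.preimage_isClosed_of_isClosed isClosed_Icc isClosed_Iic).csInf_mem hSne hSbdd
  refine ⟨sInf S, ⟨hr.1.1.lt_of_ne ?_, hr.1.2⟩, hr.2, fun t ht => ?_⟩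
  · intro hra
    exact (hra ▸ hr.2).not_gt ha
  · by_contra! htc
    exact (csInf_le hSbdd ⟨⟨ht.1, ht.2.le.trans hr.1.2⟩, htc⟩).not_gt ht.2

lemma nonneg_of_nonneg_comp_abs_mul {φ : ℝ → ℝ} (hφpos : ∀ t > 0, 0 < φ t) {d : ℝ}
    (h : 0 ≤ φ |d| * d) : 0 ≤ d := by
  by_contra! hd
  linarith [mul_neg_of_pos_of_neg (hφpos _ (abs_pos.mpr hd.ne)) hd]

section RadialEquation

variable {φ f u : ℝ → ℝ} {R lam : ℝ} {N : ℕ}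

lemma deriv_nonneg_of_integral_nonpos (hφpos : ∀ t > 0, 0 < φ t) (hlam : 0 ≤ lam)
    {r : ℝ} (hr : 0 < r)
    (hode : -(r ^ (N - 1) * (φ |deriv u r| * deriv u r)) =
      lam * ∫ t in (0 : ℝ)..r, f (u t) * t ^ (N - 1))
    (hI : ∫ t in (0 : ℝ)..r, f (u t) * t ^ (N - 1) ≤ 0) :
    0 ≤ deriv u r := by
  refine nonneg_of_nonneg_comp_abs_mul hφpos (nonneg_of_mul_nonneg_right ?_ (pow_pos hr (N - 1)))
  nlinarith [mul_nonpos_of_nonneg_of_nonpos hlam hI]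

lemma integral_eq_zero_of_isMaxOn (hlam : lam ≠ 0)
    (hode : ∀ r ∈ Ioo (0 : ℝ) R,
      -(r ^ (N - 1) * (φ |deriv u r| * deriv u r)) =
        lam * ∫ t in (0 : ℝ)..r, f (u t) * t ^ (N - 1))
    {r₀ : ℝ} (hr₀ : r₀ ∈ Ico 0 R) (hmax : ∀ r ∈ Icc 0 R, u r ≤ u r₀) :
    ∫ t in (0 : ℝ)..r₀, f (u t) * t ^ (N - 1) = 0 := by
  rcases hr₀.1.eq_or_lt with h0 | h0
  · rw [← h0, intervalIntegral.integral_same]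
  · have hderiv : deriv u r₀ = 0 :=
      IsLocalMax.deriv_eq_zero (eventually_of_mem (Icc_mem_nhds h0 hr₀.2) hmax)
    have := hode r₀ ⟨h0, hr₀.2⟩
    rw [hderiv, mul_zero, mul_zero, neg_zero, eq_comm] at this
    exact (mul_eq_zero.mp this).resolve_left hlam

lemma integral_nonpos_of_nonpos_on (hf : Continuous f) (hu : ContinuousOn u (Icc 0 R))
    {r₀ r : ℝ} (hr₀ : 0 ≤ r₀) (hr₀r : r₀ ≤ r) (hrR : r ≤ R)
    (hI₀ : ∫ t in (0 : ℝ)..r₀, f (u t) * t ^ (N - 1) = 0)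
    (hneg : ∀ t ∈ Icc r₀ r, f (u t) ≤ 0) :
    ∫ t in (0 : ℝ)..r, f (u t) * t ^ (N - 1) ≤ 0 := by
  have hg : ContinuousOn (fun t => f (u t) * t ^ (N - 1)) (Icc 0 R) :=
    (hf.comp_continuousOn hu).mul (continuous_pow (N - 1)).continuousOn
  have hint : ∀ a ∈ Icc 0 R, ∀ b ∈ Icc 0 R,
      IntervalIntegrable (fun t => f (u t) * t ^ (N - 1)) volume a b :=
    fun a ha b hb => (hg.mono (uIcc_subset_Icc ha hb)).intervalIntegrable
  have hr₀R : r₀ ∈ Icc 0 R := ⟨hr₀, hr₀r.trans hrR⟩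
  have hr : r ∈ Icc 0 R := ⟨hr₀.trans hr₀r, hrR⟩
  rw [← intervalIntegral.integral_add_adjacent_intervals (hint 0 (left_mem_Icc.2 (hr.1.trans hr.2)) r₀ hr₀R)
    (hint r₀ hr₀R r hr), hI₀, zero_add]
  calc ∫ t in r₀..r, f (u t) * t ^ (N - 1)
      ≤ ∫ _ in r₀..r, (0 : ℝ) :=
        intervalIntegral.integral_mono_on hr₀r (hint r₀ hr₀R r hr) intervalIntegrable_const
          fun t ht => mul_nonpos_of_nonpos_of_nonneg (hneg t ht) (pow_nonneg (hr₀.trans ht.1) _)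
    _ = 0 := intervalIntegral.integral_zero

end RadialEquation

theorem sup_norm_beyond_b1_general
    (R : ℝ) (N : ℕ) (lam : ℝ) (hlam : 0 < lam)
    (φ : ℝ → ℝ) (hφpos : ∀ t > 0, 0 < φ t)
    (f : ℝ → ℝ) (hf : Continuous f)
    (a₁ b₁ : ℝ) (ha₁ : 0 < a₁)
    (hfneg : ∀ s ∈ Icc a₁ b₁, f s ≤ 0)
    (u : ℝ → ℝ) (hu : ContDiffOn ℝ 1 u (Icc 0 R)) (huR : u R = 0)
    (hode : ∀ r ∈ Ioo (0 : ℝ) R,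
      -(r ^ (N - 1) * (φ |deriv u r| * deriv u r)) =
        lam * ∫ t in (0 : ℝ)..r, f (u t) * t ^ (N - 1))
    (r₀ : ℝ) (hr₀ : r₀ ∈ Ico 0 R) (hmax : ∀ r ∈ Icc 0 R, u r ≤ u r₀)
    (hgt : a₁ < u r₀) :
    b₁ < u r₀ := by
  by_contra! hle
  obtain ⟨r₁, ⟨hr₀r₁, hr₁R⟩, hur₁, habove⟩ := (hu.continuousOn.mono
    (Icc_subset_Icc_left hr₀.1)).exists_first_le hr₀.2.le hgt (huR ▸ ha₁.le)
  have hsub : Icc r₀ r₁ ⊆ Icc 0 R := Icc_subset_Icc hr₀.1 hr₁R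
  have hI₀ := integral_eq_zero_of_isMaxOn hlam.ne' hode hr₀ hmax
  have hderiv : ∀ r ∈ Ioo r₀ r₁, 0 ≤ deriv u r := fun r hr =>
    deriv_nonneg_of_integral_nonpos hφpos hlam.le (hr₀.1.trans_lt hr.1)
      (hode r ⟨hr₀.1.trans_lt hr.1, hr.2.trans_le hr₁R⟩)
      (integral_nonpos_of_nonpos_on hf hu.continuousOn hr₀.1 hr.1.le (hr.2.le.trans hr₁R) hI₀
        fun t ht => hfneg _ ⟨(habove t ⟨ht.1, ht.2.trans_lt hr.2⟩).le,
          (hmax t (hsub ⟨ht.1, ht.2.trans hr.2.le⟩)).trans hle⟩)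
  have hdiff : DifferentiableOn ℝ u (interior (Icc r₀ r₁)) := fun x hx =>
    ((hu.differentiableOn one_ne_zero).differentiableAt
      (mem_interior_iff_mem_nhds.1 (interior_mono hsub hx))).differentiableWithinAt
  have hmono : MonotoneOn u (Icc r₀ r₁) :=
    monotoneOn_of_deriv_nonneg (convex_Icc r₀ r₁) (hu.continuousOn.mono hsub) hdiff
      (by rwa [interior_Icc])
  linarith [hmono (left_mem_Icc.2 hr₀r₁.le) (right_mem_Icc.2 hr₀r₁.le) hr₀r₁.le]

/-- Claim: if the radial profile `u` attains its maximum `‖u‖_∞ > a₁` at `r₀` and `f ≤ 0`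
on `[a₁, b₁]`, then `‖u‖_∞ > b₁`. -/
theorem sup_norm_beyond_b1
    (R : ℝ) (hR : 0 < R) (N : ℕ) (hN : 1 ≤ N) (lam : ℝ) (hlam : 0 < lam)
    (φ : ℝ → ℝ) (hφcont : ContinuousOn φ (Ioi 0)) (hφpos : ∀ t > 0, 0 < φ t)
    (hφ2 : StrictMonoOn (fun t => t * φ t) (Ioi 0))
    (f : ℝ → ℝ) (hf : Continuous f)
    (a₁ b₁ : ℝ) (ha₁ : 0 < a₁) (hab : a₁ < b₁)
    (hfneg : ∀ s ∈ Icc a₁ b₁, f s ≤ 0)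
    (u : ℝ → ℝ) (hu : ContDiffOn ℝ 1 u (Icc 0 R)) (huR : u R = 0)
    (hode : ∀ r ∈ Ioo (0 : ℝ) R,
      -(r ^ (N - 1) * (φ |deriv u r| * deriv u r)) =
        lam * ∫ t in (0 : ℝ)..r, f (u t) * t ^ (N - 1))
    (r₀ : ℝ) (hr₀ : r₀ ∈ Ico 0 R) (hmax : ∀ r ∈ Icc 0 R, u r ≤ u r₀)
    (hgt : a₁ < u r₀) :
    b₁ < u r₀ :=
  sup_norm_beyond_b1_general R N lam hlam φ hφpos f hf a₁ b₁ ha₁ hfneg u hu huR hode r₀ hr₀ hmax hgt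
end

section
/- Let R > 0, N ≥ 1, λ > 0, let φ : (0,∞) → (0,∞) be C¹ with (tφ(t))′ > 0 for t > 0, let f : ℝ → ℝ be continuous, and let u ∈ C¹((0,R)) satisfy −r^{N−1} φ(|u′(r)|) u′(r) = λ ∫₀^r f(u(t)) t^{N−1} dt for all r ∈ (0,R). Then u is twice continuously differentiable on the open set O = {r ∈ (0,R) : u′(r) ≠ 0}. -/
open MeasureTheory Set Filter
open scoped Topology

/-! Writing `g s = φ(|s|) s`, the equation says `g (u' r) = -λ r^{1-N} ∫₀^r f(u) t^{N-1} dt`.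
The right-hand side is `C¹` on `(0,R)`, and where `u' r ≠ 0` the odd function `g` is `C¹` with
derivative `(tφ)'(|u' r|) > 0`, hence a local `C¹` diffeomorphism; inverting it shows that `u'`
is `C¹` there. -/

theorem ContDiffAt.of_comp_of_hasFDerivAt_equiv {𝕂 : Type*} [RCLike 𝕂]
    {X E F : Type*} [NormedAddCommGroup X] [NormedSpace 𝕂 X]
    [NormedAddCommGroup E] [NormedSpace 𝕂 E] [CompleteSpace E]
    [NormedAddCommGroup F] [NormedSpace 𝕂 F]
    {n : WithTop ℕ∞} {g : E → F} {v : X → E} {f' : E ≃L[𝕂] F} {x : X}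
    (hg : ContDiffAt 𝕂 n g (v x)) (hg' : HasFDerivAt g (f' : E →L[𝕂] F) (v x))
    (hn : n ≠ 0) (hv : ContinuousAt v x) (hgv : ContDiffAt 𝕂 n (g ∘ v) x) :
    ContDiffAt 𝕂 n v x := by
  have hinv : v =ᶠ[𝓝 x] hg.localInverse hg' hn ∘ (g ∘ v) :=
    (hv.eventually (hg.hasStrictFDerivAt' hg' hn).eventually_left_inverse).mono
      fun _ h => h.symm
  exact ((hg.to_localInverse hg' hn).comp x hgv).congr_of_eventuallyEq hinv

theorem ContinuousOn.contDiffOn_intervalIntegral {E : Type*} [NormedAddCommGroup E]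
    [NormedSpace ℝ E] [CompleteSpace E] {h : ℝ → E} {a b : ℝ} {s : Set ℝ}
    (hs : IsOpen s) (hs' : s.OrdConnected) (hh : ContinuousOn h s) (hb : b ∈ s)
    (hint : IntervalIntegrable h volume a b) :
    ContDiffOn ℝ 1 (fun r => ∫ t in a..r, h t) s := by
  have hderiv : ∀ r ∈ s, HasDerivAt (fun r => ∫ t in a..r, h t) (h r) r := fun r hr =>
    intervalIntegral.integral_hasDerivAt_right
      (hint.trans ((hh.mono (hs'.uIcc_subset hb hr)).intervalIntegrable))
      (hh.stronglyMeasurableAtFilter hs r hr) (hh.continuousAt (hs.mem_nhds hr))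
  rw [show (1 : WithTop ℕ∞) = 0 + 1 from rfl, contDiffOn_succ_iff_deriv_of_isOpen hs]
  refine ⟨fun r hr => (hderiv r hr).differentiableAt.differentiableWithinAt, by simp, ?_⟩
  exact contDiffOn_zero.2 (hh.congr fun r hr => (hderiv r hr).deriv)

section OddExtension

variable {φ : ℝ → ℝ} {c : ℝ}

theorem eventuallyEq_comp_abs_mul (hc : c ≠ 0) :
    ∃ σ : ℝ, σ * σ = 1 ∧ σ * c = |c| ∧
      (fun s => φ |s| * s) =ᶠ[𝓝 c] fun s => σ * (σ * s * φ (σ * s)) := by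
  rcases hc.lt_or_gt with hneg | hpos
  · refine ⟨-1, by norm_num, (abs_of_neg hneg).symm ▸ by ring, ?_⟩
    filter_upwards [Iio_mem_nhds hneg] with s hs
    rw [abs_of_neg hs]
    ring_nf
  · refine ⟨1, by norm_num, (abs_of_pos hpos).symm ▸ by ring, ?_⟩
    filter_upwards [Ioi_mem_nhds hpos] with s hs
    rw [abs_of_pos hs]
    ring_nf

theorem hasDerivAt_comp_abs_mul (hc : c ≠ 0) {p : ℝ}
    (h : HasDerivAt (fun t => t * φ t) p |c|) : HasDerivAt (fun s => φ |s| * s) p c := by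
  obtain ⟨σ, hσσ, hσc, heq⟩ := eventuallyEq_comp_abs_mul (φ := φ) hc
  rw [← hσc] at h
  have := (h.comp c ((hasDerivAt_id c).const_mul σ)).const_mul σ
  refine (this.congr_deriv ?_).congr_of_eventuallyEq heq
  linear_combination p * hσσ

theorem contDiffAt_comp_abs_mul (hc : c ≠ 0) {n : WithTop ℕ∞}
    (h : ContDiffAt ℝ n (fun t => t * φ t) |c|) : ContDiffAt ℝ n (fun s => φ |s| * s) c := by
  obtain ⟨σ, -, hσc, heq⟩ := eventuallyEq_comp_abs_mul (φ := φ) hc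
  rw [← hσc] at h
  exact (contDiffAt_const.mul (h.comp c (contDiffAt_const.mul contDiffAt_id))).congr_of_eventuallyEq
    heq

theorem ContinuousAt.contDiffAt_of_comp_abs_mul {v : ℝ → ℝ} {x : ℝ} {n : WithTop ℕ∞}
    (hn : n ≠ 0) (hvx : v x ≠ 0) (hφ : ContDiffAt ℝ n (fun t => t * φ t) |v x|)
    (hφ' : deriv (fun t => t * φ t) |v x| ≠ 0) (hv : ContinuousAt v x)
    (h : ContDiffAt ℝ n (fun y => φ |v y| * v y) x) : ContDiffAt ℝ n v x :=
  (contDiffAt_comp_abs_mul hvx hφ).of_comp_of_hasFDerivAt_equiv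
    ((hasDerivAt_comp_abs_mul hvx (hφ.differentiableAt hn).hasDerivAt).hasFDerivAt_equiv hφ') hn
    hv h

end OddExtension

theorem radial_profile_C2_general
    (R : ℝ) (N : ℕ) (lam : ℝ)
    (φ : ℝ → ℝ) (hφC1 : ContDiffOn ℝ 1 φ (Ioi 0)) (hφpos : ∀ t > 0, 0 < φ t)
    (hφ' : ∀ t > 0, 0 < deriv (fun s => s * φ s) t)
    (f : ℝ → ℝ) (hf : Continuous f)
    (u : ℝ → ℝ) (hu : ContDiffOn ℝ 1 u (Ioo 0 R))
    (hode : ∀ r ∈ Ioo (0 : ℝ) R,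
      -(r ^ (N - 1) * (φ |deriv u r| * deriv u r)) =
        lam * ∫ t in (0 : ℝ)..r, f (u t) * t ^ (N - 1)) :
    ContDiffOn ℝ 2 u {r ∈ Ioo (0 : ℝ) R | deriv u r ≠ 0} := by
  set G := fun r => ∫ t in (0 : ℝ)..r, f (u t) * t ^ (N - 1)
  have hu' : ContinuousOn (deriv u) (Ioo 0 R) :=
    hu.continuousOn_deriv_of_isOpen isOpen_Ioo le_rfl
  have hO : IsOpen {r ∈ Ioo (0 : ℝ) R | deriv u r ≠ 0} :=
    hu'.isOpen_inter_preimage isOpen_Ioo isOpen_compl_singleton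
  have hgu : ∀ r ∈ Ioo (0 : ℝ) R, φ |deriv u r| * deriv u r = -(lam * G r) / r ^ (N - 1) :=
    fun r hr => by rw [eq_div_iff (pow_pos hr.1 _).ne', ← hode r hr]; ring
  have key : ∀ r ∈ {r ∈ Ioo (0 : ℝ) R | deriv u r ≠ 0}, ContDiffAt ℝ 1 (deriv u) r := by
    rintro r ⟨hr, hur⟩
    -- `G r = 0` is the junk value of a non-integrable integrand; ruling it out gives integrability
    have hGr : G r ≠ 0 := fun hG0 =>
      mul_ne_zero (hφpos _ (abs_pos.2 hur)).ne' hur (by simpa [hG0] using hgu r hr)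
    have hG : ContDiffAt ℝ 1 G r :=
      (ContinuousOn.contDiffOn_intervalIntegral isOpen_Ioo ordConnected_Ioo
        ((hf.comp_continuousOn hu.continuousOn).mul (continuous_pow _).continuousOn) hr
        (intervalIntegral.intervalIntegrable_of_integral_ne_zero hGr)).contDiffAt
        (isOpen_Ioo.mem_nhds hr)
    have hP : ContDiffAt ℝ 1 (fun t => t * φ t) |deriv u r| :=
      (contDiffOn_id.mul hφC1).contDiffAt (Ioi_mem_nhds (abs_pos.2 hur))
    have hF : ContDiffAt ℝ 1 (fun s => -(lam * G s) / s ^ (N - 1)) r :=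
      (contDiffAt_const.mul hG).neg.div (contDiffAt_id.pow _) (pow_pos hr.1 _).ne'
    refine (hu'.continuousAt (isOpen_Ioo.mem_nhds hr)).contDiffAt_of_comp_abs_mul one_ne_zero hur
      hP (hφ' _ (abs_pos.2 hur)).ne' (hF.congr_of_eventuallyEq ?_)
    filter_upwards [isOpen_Ioo.mem_nhds hr] with s hs using hgu s hs
  rw [show (2 : WithTop ℕ∞) = 1 + 1 from rfl, contDiffOn_succ_iff_deriv_of_isOpen hO]
  exact ⟨(hu.differentiableOn one_ne_zero).mono fun r hr => hr.1, by simp,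
    fun r hr => (key r hr).contDiffWithinAt⟩

/-- Claim: the radial profile `u` is `C²` on the open set `O = {r ∈ (0,R) : u'(r) ≠ 0}`. -/
theorem radial_profile_C2
    (R : ℝ) (hR : 0 < R) (N : ℕ) (hN : 1 ≤ N) (lam : ℝ) (hlam : 0 < lam)
    (φ : ℝ → ℝ) (hφC1 : ContDiffOn ℝ 1 φ (Ioi 0)) (hφpos : ∀ t > 0, 0 < φ t)
    (hφ' : ∀ t > 0, 0 < deriv (fun s => s * φ s) t)
    (f : ℝ → ℝ) (hf : Continuous f)
    (u : ℝ → ℝ) (hu : ContDiffOn ℝ 1 u (Ioo 0 R))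
    (hode : ∀ r ∈ Ioo (0 : ℝ) R,
      -(r ^ (N - 1) * (φ |deriv u r| * deriv u r)) =
        lam * ∫ t in (0 : ℝ)..r, f (u t) * t ^ (N - 1)) :
    ContDiffOn ℝ 2 u {r ∈ Ioo (0 : ℝ) R | deriv u r ≠ 0} :=
  radial_profile_C2_general R N lam φ hφC1 hφpos hφ' f hf u hu hode
end

section
/- Let φ : (0,∞) → (0,∞) be a C¹ function and define α : ℝ^N \ {0} → ℝ^N by α_j(η) = φ(|η|)η_j. Suppose there are constants Γ₁, Γ₂ > 0 such that for all η ≠ 0 and all ξ ∈ ℝ^N: Σ_{i,j=1}^N (∂α_j/∂η_i)(η) ξ_i ξ_j ≥ Γ₁ φ(|η|)|ξ|² and |Σ_{i,j=1}^N (∂α_j/∂η_i)(η)| ≤ Γ₂ φ(|η|). Then Γ₁ ≤ (tφ(t))′/φ(t) ≤ Γ₂ for all t > 0. -/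
/-!
The Jacobian of `α y = φ ‖y‖ • y` at `η ≠ 0` is `φ ‖η‖ • id + (φ' ‖η‖ / ‖η‖) • η ⊗ η`, so at
`η = t • e` with `e` a unit coordinate vector its quadratic form is
`φ t * ‖ξ‖ ^ 2 + t * φ' t * ⟪e, ξ⟫ ^ 2`. Testing (φ₃) with `ξ = e` gives
`Γ₁ φ t ≤ φ t + t φ' t = (t φ)' t`. The double sum in (φ₄) is the sum of all Jacobian entries,
i.e. the quadratic form at the all-ones vector, `N φ t + t φ' t`, which dominates `(t φ)' t`
because `φ > 0`.
-/

open Set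
open scoped RealInnerProductSpace

section Radial

variable {F : Type*} [NormedAddCommGroup F] [InnerProductSpace ℝ F]

theorem hasFDerivAt_norm_of_ne_zero {η : F} (hη : η ≠ 0) :
    HasFDerivAt (‖·‖) (‖η‖⁻¹ • innerSL ℝ η) η := by
  have hsqrt : HasDerivAt Real.sqrt (1 / (2 * ‖η‖)) (‖η‖ ^ 2) := by
    simpa [Real.sqrt_sq (norm_nonneg η)] using
      Real.hasDerivAt_sqrt (pow_ne_zero 2 (norm_ne_zero_iff.mpr hη))
  have h := hsqrt.comp_hasFDerivAt η (hasStrictFDerivAt_norm_sq η).hasFDerivAt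
  simp only [Function.comp_def, Real.sqrt_sq (norm_nonneg _)] at h
  refine h.congr_fderiv ?_
  ext v
  simp only [one_div, mul_inv_rev, smul_apply, coe_innerSL_apply, nsmul_eq_mul, Nat.cast_ofNat,
    smul_eq_mul]
  field_simp

theorem hasFDerivAt_smul_self_comp_norm {φ : ℝ → ℝ} {φ' : ℝ} {η : F} (hη : η ≠ 0)
    (hφ : HasDerivAt φ φ' ‖η‖) :
    HasFDerivAt (fun y : F => φ ‖y‖ • y)
      (φ ‖η‖ • ContinuousLinearMap.id ℝ F + (φ' * ‖η‖⁻¹) • (innerSL ℝ η).smulRight η) η := by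
  refine ((hφ.comp_hasFDerivAt η (hasFDerivAt_norm_of_ne_zero hη)).smul
    (hasFDerivAt_id η)).congr_fderiv ?_
  ext v
  simp [smul_smul]

theorem inner_fderiv_smul_self_comp_norm_apply {φ : ℝ → ℝ} {φ' t : ℝ} {e : F} (he : ‖e‖ = 1)
    (ht : 0 < t) (hφ : HasDerivAt φ φ' t) (ξ : F) :
    ⟪fderiv ℝ (fun y : F => φ ‖y‖ • y) (t • e) ξ, ξ⟫ =
      φ t * ‖ξ‖ ^ 2 + t * φ' * ⟪e, ξ⟫ ^ 2 := by
  have hnorm : ‖t • e‖ = t := by rw [norm_smul, he, Real.norm_of_nonneg ht.le, mul_one]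
  have hne : t • e ≠ 0 := norm_ne_zero_iff.mp (hnorm.trans_ne ht.ne')
  rw [(hasFDerivAt_smul_self_comp_norm hne (hnorm ▸ hφ)).fderiv, hnorm]
  simp only [map_smul, add_apply, smul_apply, ContinuousLinearMap.id_apply,
    ContinuousLinearMap.smulRight_apply, coe_innerSL_apply, smul_eq_mul, inner_add_left,
    inner_smul_left, Real.ringHom_apply, inner_self_eq_norm_sq_to_K, add_right_inj]
  field_simp

end Radial

section Euclidean

variable {ι : Type*} [Fintype ι] [DecidableEq ι]

theorem EuclideanSpace.sum_sum_apply_single_mul_mul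
    (L : EuclideanSpace ℝ ι →L[ℝ] EuclideanSpace ℝ ι) (ξ : EuclideanSpace ℝ ι) :
    ∑ i, ∑ j, L (EuclideanSpace.single i 1) j * ξ i * ξ j = ⟪L ξ, ξ⟫ := by
  have hL : L ξ = ∑ i, ξ i • L (EuclideanSpace.single i 1) := by
    conv_lhs => rw [← (EuclideanSpace.basisFun ι ℝ).sum_repr ξ]
    simp [map_sum, map_smul]
  rw [hL, sum_inner, Finset.sum_congr rfl fun i _ => ?_]
  rw [real_inner_smul_left, EuclideanSpace.inner_eq_star_dotProduct, dotProduct, Finset.mul_sum]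
  refine Finset.sum_congr rfl fun j _ => ?_
  simp only [Pi.star_apply, star_trivial]
  ring

theorem EuclideanSpace.sum_sum_apply_single
    (L : EuclideanSpace ℝ ι →L[ℝ] EuclideanSpace ℝ ι) :
    ∑ i, ∑ j, L (EuclideanSpace.single i 1) j =
      ⟪L (WithLp.toLp 2 fun _ => 1), WithLp.toLp 2 fun _ => 1⟫ := by
  simpa using EuclideanSpace.sum_sum_apply_single_mul_mul L (WithLp.toLp 2 fun _ => 1)

end Euclidean

theorem phi34_implies_quotient_bounds_general
    {N : ℕ} (hN : 0 < N)
    (φ : ℝ → ℝ) (hφC1 : ContDiffOn ℝ 1 φ (Ioi 0)) (hφpos : ∀ t > 0, 0 < φ t)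
    (Γ₁ Γ₂ : ℝ)
    (hφ3 : ∀ η : EuclideanSpace ℝ (Fin N), η ≠ 0 → ∀ ξ : EuclideanSpace ℝ (Fin N),
      Γ₁ * φ ‖η‖ * ‖ξ‖ ^ 2 ≤
        ∑ i, ∑ j, (fderiv ℝ (fun y : EuclideanSpace ℝ (Fin N) => (φ ‖y‖) • y) η)
          (EuclideanSpace.single i (1 : ℝ)) j * ξ i * ξ j)
    (hφ4 : ∀ η : EuclideanSpace ℝ (Fin N), η ≠ 0 →
      |∑ i, ∑ j, (fderiv ℝ (fun y : EuclideanSpace ℝ (Fin N) => (φ ‖y‖) • y) η)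
          (EuclideanSpace.single i (1 : ℝ)) j| ≤ Γ₂ * φ ‖η‖) :
    ∀ t > (0 : ℝ),
      Γ₁ ≤ deriv (fun s => s * φ s) t / φ t ∧
      deriv (fun s => s * φ s) t / φ t ≤ Γ₂ := by
  intro t ht
  have hφ : HasDerivAt φ (deriv φ t) t :=
    ((hφC1.differentiableOn one_ne_zero).differentiableAt (Ioi_mem_nhds ht)).hasDerivAt
  have hderiv : deriv (fun s => s * φ s) t = φ t + t * deriv φ t := by
    simp [deriv_fun_mul differentiableAt_fun_id hφ.differentiableAt]
  have : NeZero N := ⟨hN.ne'⟩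
  set e := EuclideanSpace.single (0 : Fin N) (1 : ℝ)
  have he : ‖e‖ = 1 := by simp [e]
  have hnorm : ‖t • e‖ = t := by rw [norm_smul, he, Real.norm_of_nonneg ht.le, mul_one]
  have hne : t • e ≠ 0 := norm_ne_zero_iff.mp (hnorm.trans_ne ht.ne')
  have hQ := inner_fderiv_smul_self_comp_norm_apply he ht hφ
  have hlow : Γ₁ * φ t ≤ φ t + t * deriv φ t := by
    simpa [EuclideanSpace.sum_sum_apply_single_mul_mul, hQ, hnorm, he] using hφ3 (t • e) hne e
  have hhigh : φ t * N + t * deriv φ t ≤ Γ₂ * φ t := by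
    have := (abs_le.mp (hφ4 (t • e) hne)).2
    simpa [EuclideanSpace.sum_sum_apply_single, hQ, hnorm, e, EuclideanSpace.norm_sq_eq,
      EuclideanSpace.inner_single_left] using this
  have hN1 : (1 : ℝ) ≤ N := by exact_mod_cast hN
  have hφt := hφpos t ht
  rw [hderiv, le_div_iff₀ hφt, div_le_iff₀ hφt]
  exact ⟨by linarith, by nlinarith⟩

/-- Proposition 5.1: conditions (φ₃)-(φ₄) imply `Γ₁ ≤ (tφ(t))'/φ(t) ≤ Γ₂` for `t > 0`. -/
theorem phi34_implies_quotient_bounds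
    {N : ℕ} (hN : 0 < N)
    (φ : ℝ → ℝ) (hφC1 : ContDiffOn ℝ 1 φ (Ioi 0)) (hφpos : ∀ t > 0, 0 < φ t)
    (Γ₁ Γ₂ : ℝ) (hΓ₁ : 0 < Γ₁) (hΓ₂ : 0 < Γ₂)
    (hφ3 : ∀ η : EuclideanSpace ℝ (Fin N), η ≠ 0 → ∀ ξ : EuclideanSpace ℝ (Fin N),
      Γ₁ * φ ‖η‖ * ‖ξ‖ ^ 2 ≤
        ∑ i, ∑ j, (fderiv ℝ (fun y : EuclideanSpace ℝ (Fin N) => (φ ‖y‖) • y) η)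
          (EuclideanSpace.single i (1 : ℝ)) j * ξ i * ξ j)
    (hφ4 : ∀ η : EuclideanSpace ℝ (Fin N), η ≠ 0 →
      |∑ i, ∑ j, (fderiv ℝ (fun y : EuclideanSpace ℝ (Fin N) => (φ ‖y‖) • y) η)
          (EuclideanSpace.single i (1 : ℝ)) j| ≤ Γ₂ * φ ‖η‖) :
    ∀ t > (0 : ℝ),
      Γ₁ ≤ deriv (fun s => s * φ s) t / φ t ∧
      deriv (fun s => s * φ s) t / φ t ≤ Γ₂ :=
  phi34_implies_quotient_bounds_general hN φ hφC1 hφpos Γ₁ Γ₂ hφ3 hφ4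
end

section
/- Let p ≥ 1 and φ(t) = (p t^{p−2}(1 + t)ln(1 + t) + t^{p−1})/(1 + t) for t > 0. Then ∫₀^t s φ(s) ds = t^p ln(1 + t) for all t ≥ 0, (tφ(t))′ = t^{p−2}[p(p−1)ln(1+t) + 2pt/(1+t) − t²/(1+t)²] for t > 0, and p − 1 ≤ (tφ(t))′/φ(t) ≤ p for all t > 0. -/
open Set Filter Real
open scoped Topology

/-! With `Φ t = t ^ p * log (1 + t)`, the function `t φ(t)` is `Φ'`, so the first claim is the
fundamental theorem of calculus. Writing `A = t / (1 + t) ∈ (0, 1]` and `L = log (1 + t) ≥ A`,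
one has `φ t = t ^ (p - 2) (p L + A)` and `(t φ)' = t ^ (p - 2) (p (p - 1) L + 2 p A - A²)`, so the
two bounds on the ratio reduce to `A (p + 1 - A) ≥ 0` and `p (L - A) + A² ≥ 0`. -/

lemma div_one_add_le_log_one_add {t : ℝ} (ht : 0 ≤ t) : t / (1 + t) ≤ log (1 + t) := by
  have h1t : 1 + t ≠ 0 := by linarith
  calc t / (1 + t) = 1 - (1 + t)⁻¹ := by field_simp; ring
    _ ≤ log (1 + t) := one_sub_inv_le_log_of_pos (by linarith)

lemma hasDerivAt_rpow_mul_log_one_add (p : ℝ) {t : ℝ} (ht : 0 < t) :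
    HasDerivAt (fun s => s ^ p * log (1 + s))
      (p * t ^ (p - 1) * log (1 + t) + t ^ p / (1 + t)) t := by
  have hlog : HasDerivAt (fun s => log (1 + s)) (1 / (1 + t)) t := by
    simpa using ((hasDerivAt_id t).const_add 1).log (by positivity)
  refine ((hasDerivAt_rpow_const (p := p) (Or.inl ht.ne')).mul hlog).congr_deriv ?_
  ring

lemma continuousOn_log_one_add : ContinuousOn (fun s : ℝ => log (1 + s)) (Ici 0) :=
  (continuousOn_const.add continuousOn_id).log fun s hs => (by linarith [mem_Ici.1 hs] : 1 + s ≠ 0)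

lemma continuousOn_rpow_mul_log_one_add {p : ℝ} (hp : 0 ≤ p) :
    ContinuousOn (fun s => s ^ p * log (1 + s)) (Ici 0) :=
  (continuousOn_id.rpow_const fun _ _ => Or.inr hp).mul continuousOn_log_one_add

lemma continuousOn_deriv_rpow_mul_log_one_add {p : ℝ} (hp : 1 ≤ p) :
    ContinuousOn (fun s => p * s ^ (p - 1) * log (1 + s) + s ^ p / (1 + s)) (Ici 0) :=
  ((continuousOn_const.mul (continuousOn_id.rpow_const fun _ _ => Or.inr (by linarith))).mul
    continuousOn_log_one_add).add ((continuousOn_id.rpow_const fun _ _ => Or.inr (by linarith)).div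
      (continuousOn_const.add continuousOn_id) fun s hs => by linarith [mem_Ici.1 hs])

lemma hasDerivAt_deriv_rpow_mul_log_one_add (p : ℝ) {t : ℝ} (ht : 0 < t) :
    HasDerivAt (fun s => p * s ^ (p - 1) * log (1 + s) + s ^ p / (1 + s))
      (t ^ (p - 2) * (p * (p - 1) * log (1 + t) + 2 * p * t / (1 + t)
        - t ^ 2 / (1 + t) ^ 2)) t := by
  have hone_add : HasDerivAt (fun s => 1 + s) 1 t := (hasDerivAt_id t).const_add 1
  have hlog : HasDerivAt (fun s => log (1 + s)) (1 / (1 + t)) t := by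
    simpa using hone_add.log (by positivity)
  have h := (((hasDerivAt_rpow_const (p := p - 1) (Or.inl ht.ne')).const_mul p).mul hlog).add
    ((hasDerivAt_rpow_const (p := p) (Or.inl ht.ne')).div hone_add (by positivity))
  refine h.congr_deriv ?_
  rw [sub_sub, one_add_one_eq_two, rpow_sub_one ht.ne', rpow_sub ht, rpow_two]
  field_simp
  ring

lemma sub_one_le_div_and_div_le {p A L : ℝ} (hp : 0 ≤ p) (hA : 0 < A) (hA1 : A ≤ 1)
    (hAL : A ≤ L) :
    p - 1 ≤ (p * (p - 1) * L + 2 * p * A - A ^ 2) / (p * L + A) ∧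
      (p * (p - 1) * L + 2 * p * A - A ^ 2) / (p * L + A) ≤ p := by
  have hD : 0 < p * L + A := by nlinarith
  rw [le_div_iff₀ hD, div_le_iff₀ hD]
  constructor <;> nlinarith

lemma mul_eq_deriv_rpow_mul_log_one_add {p : ℝ} {φ : ℝ → ℝ}
    (hφ : ∀ t > (0 : ℝ),
      φ t = (p * t ^ (p - 2) * (1 + t) * log (1 + t) + t ^ (p - 1)) / (1 + t))
    {t : ℝ} (ht : 0 < t) :
    t * φ t = p * t ^ (p - 1) * log (1 + t) + t ^ p / (1 + t) := by
  rw [hφ t ht, rpow_sub_one ht.ne', rpow_sub ht, rpow_two]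
  field_simp

/-- Example: for `φ(t) = (p t^{p-2}(1+t)ln(1+t) + t^{p-1})/(1+t)` with `p ≥ 1`, the
primitive is `Φ(t) = t^p ln(1+t)`, the derivative `(tφ(t))'` has the stated closed form,
and `p - 1 ≤ (tφ(t))'/φ(t) ≤ p` for all `t > 0`. -/
theorem example_two
    (p : ℝ) (hp : 1 ≤ p)
    (φ : ℝ → ℝ)
    (hφ : ∀ t > (0 : ℝ),
      φ t = (p * t ^ (p - 2) * (1 + t) * Real.log (1 + t) + t ^ (p - 1)) / (1 + t)) :
    (∀ t ≥ (0 : ℝ), ∫ s in (0 : ℝ)..t, s * φ s = t ^ p * Real.log (1 + t)) ∧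
    (∀ t > (0 : ℝ),
      deriv (fun s => s * φ s) t =
        t ^ (p - 2) * (p * (p - 1) * Real.log (1 + t) + 2 * p * t / (1 + t)
          - t ^ 2 / (1 + t) ^ 2)) ∧
    (∀ t > (0 : ℝ),
      p - 1 ≤ deriv (fun s => s * φ s) t / φ t ∧
      deriv (fun s => s * φ s) t / φ t ≤ p) := by
  have hp0 : 0 < p := by linarith
  have hmul_eq : ∀ t > (0 : ℝ),
      (fun s => s * φ s) =ᶠ[𝓝 t] fun s => p * s ^ (p - 1) * log (1 + s) + s ^ p / (1 + s) :=
    fun t ht => (eventually_gt_nhds ht).mono fun s hs => mul_eq_deriv_rpow_mul_log_one_add hφ hs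
  have hderiv : ∀ t > (0 : ℝ), deriv (fun s => s * φ s) t =
      t ^ (p - 2) * (p * (p - 1) * log (1 + t) + 2 * p * t / (1 + t) - t ^ 2 / (1 + t) ^ 2) :=
    fun t ht => by rw [(hmul_eq t ht).deriv_eq, (hasDerivAt_deriv_rpow_mul_log_one_add p ht).deriv]
  refine ⟨fun t ht => ?_, hderiv, fun t ht => ?_⟩
  · have hint := ((continuousOn_deriv_rpow_mul_log_one_add hp).mono
      Icc_subset_Ici_self).intervalIntegrable_of_Icc (μ := MeasureTheory.volume) ht
    rw [intervalIntegral.integral_congr_ae (Eventually.of_forall fun s hs =>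
        mul_eq_deriv_rpow_mul_log_one_add hφ (uIoc_of_le ht ▸ hs).1),
      intervalIntegral.integral_eq_sub_of_hasDerivAt_of_le ht
        ((continuousOn_rpow_mul_log_one_add hp0.le).mono Icc_subset_Ici_self)
        (fun s hs => hasDerivAt_rpow_mul_log_one_add p hs.1) hint]
    simp [zero_rpow hp0.ne']
  · have hφt : φ t = t ^ (p - 2) * (p * log (1 + t) + t / (1 + t)) := by
      rw [hφ t ht, rpow_sub_one ht.ne', rpow_sub ht, rpow_two]
      field_simp
    rw [hderiv t ht, hφt, mul_div_mul_left _ _ (rpow_pos_of_pos ht _).ne', mul_div_assoc,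
      ← div_pow]
    exact sub_one_le_div_and_div_le hp0.le (by positivity)
      ((div_le_one (by positivity)).2 (by linarith)) (div_one_add_le_log_one_add ht.le)
end

section
/- Let p ≥ 1 and φ(t) = (p t^{p−2}(1 + t)ln(1 + t) + t^{p−1})/(1 + t) for t > 0. Then the function t ↦ (tφ(t))′/φ(t) = (2p(1+t)t − t² + p(p−1)(1+t)² ln(1+t)) / ((1+t)(t + p(1+t)ln(1+t))) is decreasing on (0,∞), and (tφ(t))′/φ(t) → p as t → 0⁺ while (tφ(t))′/φ(t) → p − 1 as t → ∞. -/
open Set Filter Real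
open scoped Topology

/-!
Writing `L = ln(1+t)`, one has `φ(t) = t^{p-2}(t + p(1+t)L)/(1+t)`, and the quotient splits as
`(tφ)'/φ = p - 1 + t(pt+p+1) / ((1+t)(t + p(1+t)L))`. The numerator of the derivative of the
fraction is `p(1+t)((p-1)t+p+1)(L - t) - t²(1 + p(1+t))`, which is `≤ 0` by `L ≤ t`. Near `0`,
cancelling `t` and using `L/t → 1` gives the limit `(p+1)/(1+p) = 1`; at infinity the fraction is
at most `(p+1)/(pL) → 0`.
-/

theorem Real.tendsto_log_one_add_div_self :
    Tendsto (fun t : ℝ => log (1 + t) / t) (𝓝[≠] 0) (𝓝 1) := by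
  have h : HasDerivAt (fun t : ℝ => log (1 + t)) 1 0 := by
    simpa using ((hasDerivAt_id (0 : ℝ)).const_add 1).log (by norm_num)
  refine (hasDerivAt_iff_tendsto_slope.1 h).congr fun t => ?_
  simp [slope_def_field]

theorem Real.hasDerivAt_log_one_add {t : ℝ} (ht : 1 + t ≠ 0) :
    HasDerivAt (fun s => log (1 + s)) (1 + t)⁻¹ t := by
  simpa [one_div] using ((hasDerivAt_id t).const_add 1).log ht

namespace ExampleTwo

noncomputable def phi (p t : ℝ) : ℝ :=
  (p * t ^ (p - 2) * (1 + t) * log (1 + t) + t ^ (p - 1)) / (1 + t)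

noncomputable def quotient (p t : ℝ) : ℝ :=
  (2 * p * (1 + t) * t - t ^ 2 + p * (p - 1) * (1 + t) ^ 2 * log (1 + t)) /
    ((1 + t) * (t + p * (1 + t) * log (1 + t)))

noncomputable def excess (p t : ℝ) : ℝ :=
  t * (p * t + p + 1) / ((1 + t) * (t + p * (1 + t) * log (1 + t)))

variable {p t : ℝ}

theorem add_mul_log_one_add_pos (hp : 0 ≤ p) (ht : 0 < t) :
    0 < t + p * (1 + t) * log (1 + t) := by
  have : 0 ≤ log (1 + t) := log_nonneg (by linarith)
  have : 0 ≤ p * (1 + t) * log (1 + t) := by positivity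
  linarith

theorem rpow_sub_two_mul_sq (ht : 0 < t) (p : ℝ) : t ^ (p - 2) * t ^ 2 = t ^ p := by
  rw [rpow_sub ht, ← rpow_two, div_mul_cancel₀ _ (rpow_pos_of_pos ht 2).ne']

theorem phi_eq (ht : 0 < t) :
    phi p t = t ^ (p - 2) * (t + p * (1 + t) * log (1 + t)) / (1 + t) := by
  rw [phi, rpow_sub_one ht.ne', ← rpow_sub_two_mul_sq ht p]
  field_simp
  ring

theorem hasDerivAt_mul_phi (ht : 0 < t) :
    HasDerivAt (fun s => s * phi p s)
      (t ^ (p - 2) * (2 * p * (1 + t) * t - t ^ 2 + p * (p - 1) * (1 + t) ^ 2 * log (1 + t)) /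
        (1 + t) ^ 2) t := by
  have h1t : 1 + t ≠ 0 := by positivity
  have hsplit : (fun s => s * phi p s) =ᶠ[𝓝 t]
      fun s => p * (s ^ (p - 1) * log (1 + s)) + s ^ p / (1 + s) := by
    filter_upwards [lt_mem_nhds ht] with s hs
    rw [phi_eq hs, rpow_sub_one hs.ne', ← rpow_sub_two_mul_sq hs p]
    field_simp
    ring
  refine HasDerivAt.congr_of_eventuallyEq ?_ hsplit
  refine ((((hasDerivAt_rpow_const (p := p - 1) (Or.inl ht.ne')).mul
    (hasDerivAt_log_one_add h1t)).const_mul p).add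
    ((hasDerivAt_rpow_const (p := p) (Or.inl ht.ne')).div
      ((hasDerivAt_id' t).const_add 1) h1t)).congr_deriv ?_
  rw [show p - 1 - 1 = p - 2 by ring, rpow_sub_one ht.ne', ← rpow_sub_two_mul_sq ht p]
  field_simp
  ring

theorem deriv_mul_phi_div_phi (hp : 0 ≤ p) (ht : 0 < t) :
    deriv (fun s => s * phi p s) t / phi p t = quotient p t := by
  have := add_mul_log_one_add_pos hp ht
  have := rpow_pos_of_pos ht (p - 2)
  rw [(hasDerivAt_mul_phi ht).deriv, phi_eq ht, quotient]
  field_simp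

theorem quotient_eq_sub_one_add_excess (hp : 0 ≤ p) (ht : 0 < t) :
    quotient p t = p - 1 + excess p t := by
  have := add_mul_log_one_add_pos hp ht
  rw [quotient, excess]
  field_simp
  ring

theorem hasDerivAt_excess (hp : 0 ≤ p) (ht : 0 < t) :
    HasDerivAt (excess p)
      ((p * (1 + t) * ((p - 1) * t + p + 1) * (log (1 + t) - t) - t ^ 2 * (1 + p * (1 + t))) /
        ((1 + t) * (t + p * (1 + t) * log (1 + t))) ^ 2) t := by
  have h1t : 1 + t ≠ 0 := by positivity
  have hden := add_mul_log_one_add_pos hp ht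
  have hid := hasDerivAt_id' t
  have hnum : HasDerivAt (fun s => s * (p * s + p + 1)) (p * t + p + 1 + t * p) t :=
    (hid.mul (((hid.const_mul p).add_const p).add_const 1)).congr_deriv (by ring)
  have hden' : HasDerivAt (fun s => (1 + s) * (s + p * (1 + s) * log (1 + s)))
      (t + p * (1 + t) * log (1 + t) + (1 + t) * (1 + p * log (1 + t) + p)) t := by
    refine ((hid.const_add 1).mul (hid.add (((hid.const_add 1).const_mul p).mul
      (hasDerivAt_log_one_add h1t)))).congr_deriv ?_
    simp only [Pi.add_apply, Pi.mul_apply]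
    field_simp
    ring
  refine (hnum.div hden' (by positivity)).congr_deriv ?_
  field_simp
  ring

theorem excess_antitoneOn (hp : 1 ≤ p) : AntitoneOn (excess p) (Ioi 0) := by
  have hderiv (t : ℝ) (ht : t ∈ Ioi 0) := hasDerivAt_excess (by linarith) ht
  refine antitoneOn_of_hasDerivWithinAt_nonpos (convex_Ioi 0)
    (fun t ht => (hderiv t ht).continuousAt.continuousWithinAt)
    (fun t ht => (hderiv t (interior_subset ht)).hasDerivWithinAt) fun t ht => ?_
  rw [interior_Ioi, mem_Ioi] at ht
  refine div_nonpos_of_nonpos_of_nonneg ?_ (sq_nonneg _)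
  have hlog : log (1 + t) - t ≤ 0 := by linarith [log_le_sub_one_of_pos (by linarith : 0 < 1 + t)]
  have : 0 ≤ p * (1 + t) * ((p - 1) * t + p + 1) := by
    have : 0 ≤ (p - 1) * t := mul_nonneg (by linarith) ht.le
    positivity
  have : 0 ≤ t ^ 2 * (1 + p * (1 + t)) := by positivity
  nlinarith [mul_nonpos_of_nonneg_of_nonpos this hlog]

theorem tendsto_excess_nhdsGT_zero (hp : 1 + p ≠ 0) :
    Tendsto (excess p) (𝓝[>] 0) (𝓝 1) := by
  have hcancel : (fun t => (p * t + p + 1) / ((1 + t) * (1 + p * (1 + t) * (log (1 + t) / t))))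
      =ᶠ[𝓝[>] 0] excess p := by
    filter_upwards [self_mem_nhdsWithin] with t (ht : 0 < t)
    rw [excess, show t + p * (1 + t) * log (1 + t) = t * (1 + p * (1 + t) * (log (1 + t) / t)) by
      field_simp, mul_left_comm, mul_div_mul_left _ _ ht.ne']
  have hid : Tendsto (fun t : ℝ => t) (𝓝[>] 0) (𝓝 0) := nhdsWithin_le_nhds
  have hlog : Tendsto (fun t : ℝ => log (1 + t) / t) (𝓝[>] 0) (𝓝 1) :=
    tendsto_log_one_add_div_self.mono_left (nhdsWithin_mono _ fun t (ht : 0 < t) => ht.ne')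
  have hlim : Tendsto
      (fun t => (p * t + p + 1) / ((1 + t) * (1 + p * (1 + t) * (log (1 + t) / t)))) (𝓝[>] 0)
      (𝓝 ((p * 0 + p + 1) / ((1 + 0) * (1 + p * (1 + 0) * 1)))) :=
    (((hid.const_mul p).add_const p).add_const 1).div ((hid.const_add 1).mul
      ((((hid.const_add 1).const_mul p).mul hlog).const_add 1)) (by simpa [add_comm] using hp)
  rw [show (p * 0 + p + 1) / ((1 + 0) * (1 + p * (1 + 0) * 1)) = 1 by
    rw [div_eq_one_iff_eq (by simpa [add_comm] using hp)]; ring] at hlim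
  exact hlim.congr' hcancel

theorem tendsto_excess_atTop (hp : 0 < p) : Tendsto (excess p) atTop (𝓝 0) := by
  have hlog : Tendsto (fun t : ℝ => p * log (1 + t)) atTop atTop :=
    (tendsto_log_atTop.comp (tendsto_atTop_add_const_left _ 1 tendsto_id)).const_mul_atTop hp
  refine tendsto_of_tendsto_of_tendsto_of_le_of_le' tendsto_const_nhds
    ((tendsto_const_nhds (x := p + 1)).div_atTop hlog) ?_ ?_
  · filter_upwards [eventually_gt_atTop 0] with t ht
    have := add_mul_log_one_add_pos hp.le ht
    exact div_nonneg (by positivity) (by positivity)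
  · filter_upwards [eventually_gt_atTop 0] with t ht
    have hden := add_mul_log_one_add_pos hp.le ht
    have hL : 0 < log (1 + t) := log_pos (by linarith)
    rw [excess, div_le_div_iff₀ (by positivity) (by positivity)]
    have hnum : t * (p * t + p + 1) ≤ (p + 1) * (1 + t) ^ 2 := by nlinarith
    have : 0 ≤ (p + 1) * (1 + t) * t := by positivity
    nlinarith [mul_le_mul_of_nonneg_right hnum (by positivity : 0 ≤ p * log (1 + t))]

end ExampleTwo

/-- Example: for `φ(t) = (p t^{p-2}(1+t)ln(1+t) + t^{p-1})/(1+t)` with `p ≥ 1`, the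
quotient `(tφ(t))'/φ(t)` has the stated closed form, is decreasing on `(0,∞)`, tends to
`p` as `t → 0⁺` and to `p - 1` as `t → ∞`. -/
theorem example_two_quotient
    (p : ℝ) (hp : 1 ≤ p)
    (φ : ℝ → ℝ)
    (hφ : ∀ t > (0 : ℝ),
      φ t = (p * t ^ (p - 2) * (1 + t) * Real.log (1 + t) + t ^ (p - 1)) / (1 + t)) :
    (∀ t > (0 : ℝ),
      deriv (fun s => s * φ s) t / φ t =
        (2 * p * (1 + t) * t - t ^ 2 + p * (p - 1) * (1 + t) ^ 2 * Real.log (1 + t)) /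
          ((1 + t) * (t + p * (1 + t) * Real.log (1 + t)))) ∧
    AntitoneOn (fun t => deriv (fun s => s * φ s) t / φ t) (Ioi 0) ∧
    Tendsto (fun t => deriv (fun s => s * φ s) t / φ t) (𝓝[>] 0) (𝓝 p) ∧
    Tendsto (fun t => deriv (fun s => s * φ s) t / φ t) atTop (𝓝 (p - 1)) := by
  open ExampleTwo in
  have hp0 : 0 ≤ p := by linarith
  have hquot : ∀ t > (0 : ℝ), deriv (fun s => s * φ s) t / φ t = quotient p t := by
    intro t ht
    have hmul : (fun s => s * φ s) =ᶠ[𝓝 t] fun s => s * phi p s := by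
      filter_upwards [lt_mem_nhds ht] with s hs
      rw [hφ s hs, phi]
    rw [hmul.deriv_eq, hφ t ht]
    exact deriv_mul_phi_div_phi hp0 ht
  have hexcess : EqOn (fun t => p - 1 + excess p t) (fun t => deriv (fun s => s * φ s) t / φ t)
      (Ioi 0) := fun t ht => ((hquot t ht).trans (quotient_eq_sub_one_add_excess hp0 ht)).symm
  refine ⟨hquot, ((excess_antitoneOn hp).const_add (p - 1)).congr hexcess, ?_, ?_⟩
  · have := (tendsto_excess_nhdsGT_zero (by linarith)).const_add (p - 1)
    rw [sub_add_cancel] at this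
    exact this.congr' (eventuallyEq_nhdsWithin_of_eqOn hexcess)
  · have := (tendsto_excess_atTop (by linarith)).const_add (p - 1)
    rw [add_zero] at this
    exact this.congr' (hexcess.eventuallyEq_of_mem (Ioi_mem_atTop 0))
end
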